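/- arXiv:2102.12326 — 11 statements merged into one kernel-verified Lean document; each statement's English description precedes it below -/
import Mathlib

section
/- Let R be a commutative ring equipped with an involutive ring automorphism r ↦ r̄, let n ≥ 1, let x, y ∈ R^n and let λ ∈ R satisfy λ·λ̄ = 1. Then for every j ∈ {1,…,n−1} one has Θ(x,y,j)[λ] = λ·Θ(y,x,n−j)[λ̄]. -/
/-- The mapping Θ(x,y,j)[λ] = Σ_{i=0}^{n−j−1} x_{[i+j]_n}·y_i + λ·Σ_{i=n−j}^{n−1} x_{[i+j]_n}·y_i. -/
def Theta {R : Type*} [CommRing R] (n : ℕ) (x y : ℕ → R) (j : ℕ) (l : R) : R :=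
  (∑ i ∈ Finset.range (n - j), x ((i + j) % n) * y i)
    + l * ∑ i ∈ Finset.Ico (n - j) n, x ((i + j) % n) * y i

theorem stmt0 {R : Type*} [CommRing R] (σ : R ≃+* R) (hσ : Function.Involutive σ)
    (n : ℕ) (hn : 1 ≤ n) (x y : ℕ → R) (l : R) (hl : l * σ l = 1)
    (j : ℕ) (hj1 : 1 ≤ j) (hj2 : j ≤ n - 1) :
    Theta n x y j l = l * Theta n y x (n - j) (σ l) := by
  have hjn : j < n := lt_of_le_of_lt hj2 (Nat.sub_lt hn one_pos)
  have hnn : n - (n - j) = j := Nat.sub_sub_self hjn.le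
  unfold Theta
  rw [hnn]
  have hA : (∑ i ∈ Finset.range (n - j), x ((i + j) % n) * y i)
      = ∑ i ∈ Finset.Ico j n, y ((i + (n - j)) % n) * x i := by
    rw [Finset.sum_Ico_eq_sum_range]
    apply Finset.sum_congr rfl
    intro i hi
    rw [Finset.mem_range] at hi
    have h1 : (i + j) % n = i + j := Nat.mod_eq_of_lt (by omega)
    have h2 : (j + i + (n - j)) % n = i := by
      have : j + i + (n - j) = i + n := by omega
      rw [this, Nat.add_mod_right, Nat.mod_eq_of_lt (by omega)]
    rw [h1, h2]
    ring_nf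
  have hB : (∑ i ∈ Finset.Ico (n - j) n, x ((i + j) % n) * y i)
      = ∑ i ∈ Finset.range j, y ((i + (n - j)) % n) * x i := by
    rw [Finset.sum_Ico_eq_sum_range, hnn]
    apply Finset.sum_congr rfl
    intro i hi
    rw [Finset.mem_range] at hi
    have h1 : (n - j + i + j) % n = i := by
      have : n - j + i + j = i + n := by omega
      rw [this, Nat.add_mod_right, Nat.mod_eq_of_lt (by omega)]
    have h2 : (i + (n - j)) % n = i + (n - j) := Nat.mod_eq_of_lt (by omega)
    rw [h1, h2]
    have : n - j + i = i + (n - j) := by omega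
    rw [this]
    ring
  rw [hA, hB]
  linear_combination -(∑ i ∈ Finset.Ico j n, y ((i + (n - j)) % n) * x i) * hl
end

section
/- Let R be a commutative ring equipped with an involutive ring automorphism r ↦ r̄, let n ≥ 1, let x ∈ R^n and let λ ∈ R satisfy λ·λ̄ = 1. Define f(j) = Θ(x, x̄, j)[λ̄], where x̄ denotes entrywise conjugation of x. Then for every j ∈ {1,…,n−1} one has f(j) equal to the conjugate of λ·f(n−j), i.e. f(j) = conj(λ·f(n−j)). -/
theorem stmt1 {R : Type*} [CommRing R] (σ : R ≃+* R) (hσ : Function.Involutive σ)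
    (n : ℕ) (hn : 1 ≤ n) (x : ℕ → R) (l : R) (hl : l * σ l = 1)
    (f : ℕ → R) (hf : ∀ j, f j = Theta n x (fun i => σ (x i)) j (σ l))
    (j : ℕ) (hj1 : 1 ≤ j) (hj2 : j ≤ n - 1) :
    f j = σ (l * f (n - j)) := by
  have hjn : j < n := lt_of_le_of_lt hj2 (Nat.sub_lt hn one_pos)
  have h2 : ∀ a, σ (σ a) = a := hσ
  rw [hf j, hf (n - j)]
  unfold Theta
  rw [Nat.sub_sub_self hjn.le, map_mul, map_add, map_mul, h2 l, map_sum, map_sum]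
  simp only [map_mul, h2]
  rw [mul_add, ← mul_assoc, mul_comm (σ l) l, hl, one_mul]
  have e1 : (∑ i ∈ Finset.range (n - j), x ((i + j) % n) * σ (x i))
      = ∑ i ∈ Finset.Ico j n, σ (x ((i + (n - j)) % n)) * x i := by
    rw [Finset.sum_Ico_eq_sum_range]
    apply Finset.sum_congr rfl
    intro i hi
    simp only [Finset.mem_range] at hi
    have ha : j + i + (n - j) = i + n := by omega
    rw [ha, Nat.add_mod_right, Nat.mod_eq_of_lt (by omega), Nat.mod_eq_of_lt (by omega)]
    ring
  have e2 : (∑ i ∈ Finset.Ico (n - j) n, x ((i + j) % n) * σ (x i))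
      = ∑ i ∈ Finset.range j, σ (x ((i + (n - j)) % n)) * x i := by
    rw [Finset.sum_Ico_eq_sum_range, Nat.sub_sub_self hjn.le]
    apply Finset.sum_congr rfl
    intro i hi
    simp only [Finset.mem_range] at hi
    have ha : n - j + i + j = i + n := by omega
    rw [ha, Nat.add_mod_right, Nat.mod_eq_of_lt (by omega), Nat.mod_eq_of_lt (by omega)]
    ring
  rw [e1, e2]
  ring
end

section
/- Let R be a commutative ring equipped with an involutive ring automorphism r ↦ r̄, let n, k ≥ 1, let a_0,…,a_{k−1} ∈ R^n and let λ ∈ R satisfy λ·λ̄ = 1. Then for every i ∈ {0,…,k−1}, every j ∈ {1,…,k−1} and every t ∈ {1,…,n−1} one has Θ(a_{[i+j]_k}, ā_i, t)[λ̄] = conj( λ · Θ(a_i, ā_{[i+j]_k}, n−t)[λ̄] ), where [m]_k denotes m mod k and ā denotes entrywise conjugation. -/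
theorem stmt2 {R : Type*} [CommRing R] (σ : R ≃+* R) (hσ : Function.Involutive σ)
    (n k : ℕ) (hn : 1 ≤ n) (hk : 1 ≤ k) (a : ℕ → ℕ → R) (l : R) (hl : l * σ l = 1)
    (i : ℕ) (hi : i ≤ k - 1) (j : ℕ) (hj1 : 1 ≤ j) (hj2 : j ≤ k - 1)
    (t : ℕ) (ht1 : 1 ≤ t) (ht2 : t ≤ n - 1) :
    Theta n (a ((i + j) % k)) (fun s => σ (a i s)) t (σ l)
      = σ (l * Theta n (a i) (fun s => σ (a ((i + j) % k) s)) (n - t) (σ l)) := by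
  have htn : t < n := by omega
  have h1 : n - (n - t) = t := by omega
  simp only [Theta, map_mul, map_add, map_sum, hσ _, h1]
  rw [Finset.sum_Ico_eq_sum_range, Finset.sum_Ico_eq_sum_range, h1]
  have A : ∑ s ∈ Finset.range (n - t),
      a ((i+j)%k) ((s + t) % n) * σ (a i s)
      = ∑ s ∈ Finset.range (n - t), σ (a i ((t + s + (n - t)) % n)) * a ((i+j)%k) (t + s) := by
    refine Finset.sum_congr rfl fun s hs => ?_
    simp only [Finset.mem_range] at hs
    have h2 : (s + t) % n = s + t := Nat.mod_eq_of_lt (by omega)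
    have h3 : (t + s + (n - t)) % n = s := by
      have : t + s + (n - t) = s + n := by omega
      rw [this, Nat.add_mod_right, Nat.mod_eq_of_lt (by omega)]
    rw [h2, h3, mul_comm, Nat.add_comm s t]
  have B : ∑ s ∈ Finset.range t,
      a ((i+j)%k) ((n - t + s + t) % n) * σ (a i (n - t + s))
      = ∑ s ∈ Finset.range t, σ (a i ((s + (n - t)) % n)) * a ((i+j)%k) s := by
    refine Finset.sum_congr rfl fun s hs => ?_
    simp only [Finset.mem_range] at hs
    have h2 : (n - t + s + t) % n = s := by
      have : n - t + s + t = s + n := by omega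
      rw [this, Nat.add_mod_right, Nat.mod_eq_of_lt (by omega)]
    have h3 : (s + (n - t)) % n = n - t + s := by
      rw [Nat.mod_eq_of_lt (by omega), Nat.add_comm]
    rw [h2, h3, mul_comm]
  rw [A, B]
  have hl' : σ l * l = 1 := by rw [mul_comm]; exact hl
  linear_combination -(∑ s ∈ Finset.range (n - t), σ (a i ((t + s + (n - t)) % n)) * a ((i+j)%k) (t + s)) * hl'
end

section
/- Let R be a commutative ring equipped with an involutive ring automorphism r ↦ r̄, let n ≥ 1, let a, b ∈ R^n, and let λ ∈ R satisfy λ·λ̄ = 1. Set A = circ_λ(a) and B = circ_λ(b). Then B·(Ā)^T = circ_λ(v_0, v_1, …, v_{n−1}), where v_j = Θ(b, ā, j)[λ̄] for every j ∈ {0,…,n−1}. -/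
open Matrix

/-- The λ-circulant matrix generated by `a`: the (i,j) entry is `a (j - i)` if `i ≤ j`
and `λ * a (n + j - i)` otherwise. -/
def circ {R : Type*} [CommRing R] (n : ℕ) (l : R) (a : ℕ → R) : Matrix (Fin n) (Fin n) R :=
  Matrix.of fun i j => if (i : ℕ) ≤ (j : ℕ) then a ((j : ℕ) - i) else l * a (n + j - i)

/-!
Write a column index as `i + m` in `Fin n`: entry `(i, i + m)` of `circ n l a` is `l ^ c * a m`,
where `c = (i + m) / n` is the carry of the addition. Reindexing the sum for entry `(i, k)` of the
product by `j = k + m` and writing `k = i + s`, the `m`-th term carries `l ^ c₃ * σ l ^ c₄`, and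
the `m`-th term of `Θ` scaled by entry `(i, k)` carries `l ^ c₁ * σ l ^ c₂`. Both `c₃ + c₂` and
`c₁ + c₄` are the carry of `i + s + m`, so `l * σ l = 1` makes the two factors equal.
-/

theorem Nat.add_mod_div_add_div (a b n : ℕ) : (a + b % n) / n + b / n = (a + b) / n := by
  rcases n.eq_zero_or_pos with rfl | hn
  · simp
  · conv_rhs => rw [← Nat.mod_add_div b n, ← add_assoc, Nat.add_mul_div_left _ _ hn]

theorem pow_mul_pow_eq_of_mul_eq_one {M : Type*} [CommMonoid M] {l l' : M} (hl : l * l' = 1)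
    {c d c' d' : ℕ} (h : c + d' = c' + d) : l ^ c * l' ^ d = l ^ c' * l' ^ d' := by
  calc l ^ c * l' ^ d = l ^ c * l' ^ d * (l * l') ^ d' := by rw [hl, one_pow, mul_one]
    _ = l ^ (c + d') * l' ^ (d' + d) := by rw [mul_pow, pow_add, pow_add]; ac_rfl
    _ = l ^ c' * l' ^ d' * (l * l') ^ d := by rw [h, mul_pow, pow_add, pow_add]; ac_rfl
    _ = l ^ c' * l' ^ d' := by rw [hl, one_pow, mul_one]

section Circulant

variable {R : Type*} [CommRing R] {n : ℕ}

theorem circ_apply_add (l : R) (a : ℕ → R) (i m : Fin n) :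
    circ n l a i (i + m) = l ^ (((i : ℕ) + m) / n) * a m := by
  have hi := i.isLt
  have hm := m.isLt
  simp only [circ, of_apply, Fin.val_add]
  rcases lt_or_ge ((i : ℕ) + m) n with h | h
  · rw [Nat.mod_eq_of_lt h, Nat.div_eq_of_lt h, if_pos (by omega), pow_zero, one_mul]
    congr 1
    omega
  · have hdiv : ((i : ℕ) + m) / n = 1 := by
      exact Nat.div_eq_of_lt_le (by omega) (by omega)
    rw [Nat.mod_eq_sub_mod h, Nat.mod_eq_of_lt (by omega), hdiv, if_neg (by omega), pow_one]
    congr 2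
    omega

theorem Theta_eq_sum (x y : ℕ → R) {s : ℕ} (hs : s < n) (l : R) :
    Theta n x y s l = ∑ m : Fin n, l ^ ((s + m) / n) * (x ((m + s) % n) * y m) := by
  rw [Fin.sum_univ_eq_sum_range (fun m => l ^ ((s + m) / n) * (x ((m + s) % n) * y m)),
    ← Finset.sum_range_add_sum_Ico _ (Nat.sub_le n s), Theta, Finset.mul_sum]
  congr 1
  · refine Finset.sum_congr rfl fun m hm => ?_
    rw [Nat.div_eq_of_lt (by simp at hm; omega), pow_zero, one_mul]
  · refine Finset.sum_congr rfl fun m hm => ?_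
    have hdiv : (s + m) / n = 1 := by
      simp only [Finset.mem_Ico] at hm
      exact Nat.div_eq_of_lt_le (by omega) (by omega)
    rw [hdiv, pow_one]

end Circulant

theorem stmt3_general {R : Type*} [CommRing R] (σ : R ≃+* R)
    (n : ℕ) (hn : 1 ≤ n) (a b : ℕ → R) (l : R) (hl : l * σ l = 1) :
    circ n l b * ((circ n l a).map σ)ᵀ
      = circ n l (fun j => Theta n b (fun i => σ (a i)) j (σ l)) := by
  have : NeZero n := ⟨by omega⟩
  ext i k
  obtain ⟨s, rfl⟩ : ∃ s, k = i + s := ⟨k - i, (add_sub_cancel i k).symm⟩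
  rw [mul_apply, ← Equiv.sum_comp (Equiv.addLeft (i + s)), circ_apply_add,
    Theta_eq_sum _ _ s.isLt, Finset.mul_sum]
  refine Finset.sum_congr rfl fun m _ => ?_
  have assoc : i + s + m = i + (s + m) := add_assoc i s m
  simp only [Equiv.coe_addLeft, transpose_apply, map_apply]
  rw [assoc, circ_apply_add, ← assoc, circ_apply_add, map_mul, map_pow]
  have carry :
      ((i : ℕ) + (s + m) % n) / n + (s + m) / n = (i + s) / n + ((i + s) % n + m) / n := by
    rw [Nat.add_mod_div_add_div, add_comm ((i + s) / n), add_comm ((i + s) % n),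
      Nat.add_mod_div_add_div, add_comm (m : ℕ), add_assoc]
  rw [Fin.val_add, Fin.val_add, add_comm (m : ℕ) s]
  linear_combination (b ((s + m) % n) * σ (a m)) * pow_mul_pow_eq_of_mul_eq_one hl carry

theorem stmt3 {R : Type*} [CommRing R] (σ : R ≃+* R) (hσ : Function.Involutive σ)
    (n : ℕ) (hn : 1 ≤ n) (a b : ℕ → R) (l : R) (hl : l * σ l = 1) :
    circ n l b * ((circ n l a).map σ)ᵀ
      = circ n l (fun j => Theta n b (fun i => σ (a i)) j (σ l)) :=
  stmt3_general σ n hn a b l hl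
end

section
/- Let R be a commutative ring equipped with an involutive ring automorphism r ↦ r̄, let n ≥ 1, let a ∈ R^n, and let λ ∈ R satisfy λ·λ̄ = 1. Set A = circ_λ(a). Then A·(Ā)^T = −I_n if and only if Θ(a, ā, 0) = −1 and Θ(a, ā, j)[λ̄] = 0 for every j ∈ {1,…,⌊n/2⌋}. -/
open Matrix

section Aux

variable {R : Type*} [CommRing R]

lemma key_sum (σ : R ≃+* R) (n : ℕ) (a : ℕ → R) (l : R) (hl : l * σ l = 1)
    (i k : ℕ) (hik : i ≤ k) (hk : k < n) :
    ∑ t ∈ Finset.range n,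
      (if i ≤ t then a (t - i) else l * a (n + t - i)) *
        σ (if k ≤ t then a (t - k) else l * a (n + t - k))
      = Theta n a (fun m => σ (a m)) (k - i) (σ l) := by
  have h1 : n - (k - i) - (n - k) = i := by omega
  have h2 : n - (n - (k - i)) = k - i := by omega
  simp only [Theta]
  rw [Finset.range_eq_Ico, Finset.range_eq_Ico, ← Finset.sum_Ico_consecutive _ (Nat.zero_le k) hk.le,
    ← Finset.sum_Ico_consecutive _ (Nat.zero_le i) hik,
    ← Finset.sum_Ico_consecutive _ (Nat.zero_le (n - k)) (by omega : n - k ≤ n - (k - i)),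
    Finset.sum_Ico_eq_sum_range, Finset.sum_Ico_eq_sum_range, Finset.sum_Ico_eq_sum_range,
    Finset.sum_Ico_eq_sum_range, Finset.sum_Ico_eq_sum_range, Finset.sum_Ico_eq_sum_range,
    h1, h2]
  simp only [Nat.sub_zero, Nat.zero_add]
  have hA : (∑ t ∈ Finset.range (n - k),
      (if i ≤ k + t then a (k + t - i) else l * a (n + (k + t) - i)) *
        σ (if k ≤ k + t then a (k + t - k) else l * a (n + (k + t) - k)))
      = ∑ s ∈ Finset.range (n - k), a ((s + (k - i)) % n) * σ (a s) := by
    refine Finset.sum_congr rfl fun t ht => ?_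
    rw [Finset.mem_range] at ht
    rw [if_pos (by omega), if_pos (by omega), Nat.mod_eq_of_lt (by omega)]
    have e1 : k + t - i = t + (k - i) := by omega
    have e2 : k + t - k = t := by omega
    rw [e1, e2]
  have hB : (∑ t ∈ Finset.range i,
      (if i ≤ t then a (t - i) else l * a (n + t - i)) *
        σ (if k ≤ t then a (t - k) else l * a (n + t - k)))
      = ∑ s ∈ Finset.range i, a ((n - k + s + (k - i)) % n) * σ (a (n - k + s)) := by
    refine Finset.sum_congr rfl fun t ht => ?_
    rw [Finset.mem_range] at ht
    rw [if_neg (by omega), if_neg (by omega), _root_.map_mul, Nat.mod_eq_of_lt (by omega)]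
    have e1 : n - k + t + (k - i) = n + t - i := by omega
    have e2 : n - k + t = n + t - k := by omega
    rw [e1, e2]
    linear_combination a (n + t - i) * σ (a (n + t - k)) * hl
  have hC : (∑ t ∈ Finset.range (k - i),
      (if i ≤ i + t then a (i + t - i) else l * a (n + (i + t) - i)) *
        σ (if k ≤ i + t then a (i + t - k) else l * a (n + (i + t) - k)))
      = ∑ s ∈ Finset.range (k - i),
          σ l * (a ((n - (k - i) + s + (k - i)) % n) * σ (a (n - (k - i) + s))) := by
    refine Finset.sum_congr rfl fun t ht => ?_
    rw [Finset.mem_range] at ht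
    rw [if_pos (by omega), if_neg (by omega), _root_.map_mul]
    have e0 : n - (k - i) + t + (k - i) = n + t := by omega
    rw [e0, Nat.add_mod_left, Nat.mod_eq_of_lt (by omega)]
    have e1 : i + t - i = t := by omega
    have e2 : n + (i + t) - k = n - (k - i) + t := by omega
    rw [e1, e2]
    ring
  rw [hA, hB, hC, ← Finset.mul_sum]
  ring

lemma entry_eq (σ : R ≃+* R) (n : ℕ) (a : ℕ → R) (l : R) (hl : l * σ l = 1)
    (i k : Fin n) (hik : (i : ℕ) ≤ (k : ℕ)) :
    (circ n l a * ((circ n l a).map σ)ᵀ) i k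
      = Theta n a (fun m => σ (a m)) ((k : ℕ) - (i : ℕ)) (σ l) := by
  rw [Matrix.mul_apply, ← key_sum σ n a l hl i k hik k.isLt, ← Fin.sum_univ_eq_sum_range]
  refine Finset.sum_congr rfl fun t _ => ?_
  simp [circ, Matrix.map_apply, Matrix.transpose_apply]

lemma entry_symm (σ : R ≃+* R) (hσ : Function.Involutive σ) (n : ℕ) (l : R) (a : ℕ → R)
    (i k : Fin n) :
    (circ n l a * ((circ n l a).map σ)ᵀ) i k
      = σ ((circ n l a * ((circ n l a).map σ)ᵀ) k i) := by
  rw [Matrix.mul_apply, Matrix.mul_apply, map_sum]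
  refine Finset.sum_congr rfl fun t _ => ?_
  simp only [Matrix.map_apply, Matrix.transpose_apply, _root_.map_mul]
  rw [hσ]
  ring

lemma theta_flip (σ : R ≃+* R) (hσ : Function.Involutive σ) (n : ℕ) (a : ℕ → R) (l : R)
    (hl : l * σ l = 1) (j : ℕ) (hj : j ≤ n) :
    Theta n a (fun m => σ (a m)) (n - j) (σ l)
      = σ l * σ (Theta n a (fun m => σ (a m)) j (σ l)) := by
  have h2 : n - (n - j) = j := by omega
  have hS1 : σ (∑ s ∈ Finset.range (n - j), a ((s + j) % n) * σ (a s))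
      = ∑ s ∈ Finset.Ico j n, a ((s + (n - j)) % n) * σ (a s) := by
    rw [map_sum, Finset.sum_Ico_eq_sum_range]
    refine Finset.sum_congr rfl fun t ht => ?_
    rw [Finset.mem_range] at ht
    rw [_root_.map_mul, hσ]
    have e1 : (t + j) % n = t + j := Nat.mod_eq_of_lt (by omega)
    have e2 : (j + t + (n - j)) % n = t := by
      have e : j + t + (n - j) = n + t := by omega
      rw [e, Nat.add_mod_left, Nat.mod_eq_of_lt (by omega)]
    rw [e1, e2]
    have e3 : j + t = t + j := by omega
    rw [e3]
    ring
  have hS2 : σ (∑ s ∈ Finset.Ico (n - j) n, a ((s + j) % n) * σ (a s))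
      = ∑ s ∈ Finset.range j, a ((s + (n - j)) % n) * σ (a s) := by
    rw [map_sum, Finset.sum_Ico_eq_sum_range, h2]
    refine Finset.sum_congr rfl fun t ht => ?_
    rw [Finset.mem_range] at ht
    rw [_root_.map_mul, hσ]
    have e1 : (n - j + t + j) % n = t := by
      have e : n - j + t + j = n + t := by omega
      rw [e, Nat.add_mod_left, Nat.mod_eq_of_lt (by omega)]
    have e2 : (t + (n - j)) % n = t + (n - j) := Nat.mod_eq_of_lt (by omega)
    rw [e1, e2]
    have e3 : n - j + t = t + (n - j) := by omega
    rw [e3]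
    ring
  simp only [Theta, h2]
  rw [map_add, _root_.map_mul, hσ, hS1, hS2]
  linear_combination (-(∑ s ∈ Finset.range j, a ((s + (n - j)) % n) * σ (a s))) * hl

end Aux

theorem stmt4 {R : Type*} [CommRing R] (σ : R ≃+* R) (hσ : Function.Involutive σ)
    (n : ℕ) (hn : 1 ≤ n) (a : ℕ → R) (l : R) (hl : l * σ l = 1) :
    circ n l a * ((circ n l a).map σ)ᵀ = -1
      ↔ (Theta n a (fun i => σ (a i)) 0 (σ l) = -1
          ∧ ∀ j, 1 ≤ j → j ≤ n / 2 → Theta n a (fun i => σ (a i)) j (σ l) = 0) := by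
  constructor
  · intro h
    have hE : ∀ i k : Fin n, (circ n l a * ((circ n l a).map σ)ᵀ) i k
        = (-1 : Matrix (Fin n) (Fin n) R) i k := fun i k => by rw [h]
    constructor
    · have h0 := hE ⟨0, hn⟩ ⟨0, hn⟩
      rw [entry_eq σ n a l hl _ _ (le_refl 0)] at h0
      simpa [Matrix.neg_apply, Matrix.one_apply] using h0
    · intro j hj1 hj2
      have hjn : j < n := lt_of_le_of_lt hj2 (Nat.div_lt_self (by omega) (by norm_num))
      have h0 := hE ⟨0, by omega⟩ ⟨j, hjn⟩
      rw [entry_eq σ n a l hl _ _ (by simp)] at h0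
      have hne : (⟨0, by omega⟩ : Fin n) ≠ ⟨j, hjn⟩ := by
        simp only [ne_eq, Fin.mk.injEq]
        omega
      simpa [Matrix.neg_apply, Matrix.one_apply, hne] using h0
  · rintro ⟨h0, hj⟩
    have hT : ∀ d, d < n → Theta n a (fun m => σ (a m)) d (σ l)
        = if d = 0 then -1 else 0 := by
      intro d hd
      by_cases hd0 : d = 0
      · subst hd0
        simpa using h0
      · rw [if_neg hd0]
        by_cases hdh : d ≤ n / 2
        · exact hj d (by omega) hdh
        · have h1 : 1 ≤ n - d := by omega
          have h2 : n - d ≤ n / 2 := by omega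
          have hf := theta_flip σ hσ n a l hl (n - d) (by omega)
          rw [show n - (n - d) = d from by omega] at hf
          rw [hf, hj (n - d) h1 h2, map_zero, mul_zero]
    ext i k
    have hkn := k.isLt
    have hin := i.isLt
    rcases le_or_gt (i : ℕ) (k : ℕ) with hik | hik
    · rw [entry_eq σ n a l hl i k hik, hT _ (by omega)]
      by_cases he : i = k
      · subst he
        simp [Matrix.neg_apply, Matrix.one_apply]
      · have hv : (k : ℕ) - (i : ℕ) ≠ 0 := by
          have : (i : ℕ) ≠ (k : ℕ) := fun hc => he (Fin.ext hc)
          omega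
        rw [if_neg hv]
        simp [Matrix.neg_apply, Matrix.one_apply, he]
    · rw [entry_symm σ hσ n l a i k, entry_eq σ n a l hl k i hik.le, hT _ (by omega)]
      have hv : (i : ℕ) - (k : ℕ) ≠ 0 := by omega
      have hne : i ≠ k := fun hc => by simp [hc] at hik
      rw [if_neg hv, map_zero]
      simp [Matrix.neg_apply, Matrix.one_apply, hne]
end

section
/- Let F be a field equipped with an involutive field automorphism r ↦ r̄, let n ≥ 1, let a ∈ F^n and let λ ∈ F satisfy λ·λ̄ = 1. Set A = circ_λ(a) and let C be the F-linear span in F^{2n} of the rows of the n×2n matrix G = (I_n | A). Then C is Hermitian self-dual (C = C^{⊥_H}) if and only if Θ(a, ā, 0) = −1 and Θ(a, ā, j)[λ̄] = 0 for every j ∈ {1,…,⌊n/2⌋}. -/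
open Matrix

/-!
Let `τ` be the `λ`-twisted cyclic shift `(v₀, …, v_{n-1}) ↦ (λ v_{n-1}, v₀, …, v_{n-2})`.
The `i`-th row of `circ_λ(a)` is `τⁱ a`, `τⁿ = λ`, and `λ λ̄ = 1` makes `τ` an isometry of the
Hermitian form `⟨u, v⟩ = Σ uᵢ v̄ᵢ`. Hence `⟨τⁱ a, τᵏ a⟩ = ⟨a, τ^(k-i) a⟩ = Θ(a, ā, k - i)[λ̄]`
for `i ≤ k`, while `⟨a, τᵈ a⟩ = λ̄ · conj ⟨a, τ^(n-d) a⟩`; so the Gram matrix `A Āᵀ` of the rows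
is `-I` exactly when the conditions on `Θ` hold for `d ≤ ⌊n/2⌋`.

On the coding side, the row space `C` of `(I | A)` is the graph `{(u, u A)}` and
`C^⊥ = {(-q Āᵀ, q)}`, so `C = C^⊥` iff `A Āᵀ = -I` (which forces `Āᵀ A = -I` as well).
-/

open Finset

section TwistShift

variable {R : Type*} [Mul R] {n : ℕ}

def twistShift (l : R) (v : Fin n → R) : Fin n → R :=
  fun j => if h : (j : ℕ) = 0 then l * v ⟨n - 1, by omega⟩ else v ⟨j - 1, by omega⟩

theorem iterate_twistShift_apply (l : R) (v : Fin n → R) {i : ℕ} (hi : i ≤ n) (j : Fin n) :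
    (twistShift l)^[i] v j =
      if h : i ≤ j then v ⟨j - i, by omega⟩ else l * v ⟨n + j - i, by omega⟩ := by
  induction i generalizing j with
  | zero => simp
  | succ i ih =>
    rw [Function.iterate_succ_apply', twistShift]
    split_ifs <;> rw [ih (by omega)]
    · omega
    · rw [dif_pos (by simp; omega)]; congr 2; simp; omega
    · rw [dif_pos (by simp; omega)]; congr 2; simp; omega
    · rw [dif_neg (by simp; omega)]; congr 3; simp; omega

theorem iterate_twistShift_self (l : R) (v : Fin n → R) :
    (twistShift l)^[n] v = fun j => l * v j := by
  funext j
  rw [iterate_twistShift_apply l v le_rfl, dif_neg (by omega)]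
  congr 2; ext; simp

end TwistShift

theorem circ_row_eq_iterate {R : Type*} [CommRing R] {n : ℕ} (l : R) (a : ℕ → R) (i : Fin n) :
    circ n l a i = (twistShift l)^[i] (fun j => a j) := by
  funext j
  rw [iterate_twistShift_apply l _ i.isLt.le]
  simp only [circ, of_apply]
  split_ifs <;> rfl

section Hermitian

variable {F : Type*} [Field F] (σ : F ≃+* F)

def hermDot {ι : Type*} [Fintype ι] (x y : ι → F) : F := ∑ c, x c * σ (y c)

def hermDual {ι : Type*} [Fintype ι] (C : Submodule F (ι → F)) : Set (ι → F) :=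
  {x | ∀ y ∈ C, hermDot σ x y = 0}

theorem mul_map_transpose_apply {m n ι : Type*} [Fintype ι] (A : Matrix m ι F)
    (B : Matrix n ι F) (i : m) (k : n) :
    (A * (B.map σ)ᵀ) i k = hermDot σ (A i) (B k) :=
  rfl

theorem mem_hermDual_span_iff {ι κ : Type*} [Fintype ι] (v : κ → ι → F) (x : ι → F) :
    x ∈ hermDual σ (Submodule.span F (Set.range v)) ↔ ∀ k, hermDot σ x (v k) = 0 := by
  refine ⟨fun h k => h _ (Submodule.subset_span ⟨k, rfl⟩), fun h y hy => ?_⟩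
  induction hy using Submodule.span_induction with
  | mem y hy => obtain ⟨k, rfl⟩ := hy; exact h k
  | zero => simp [hermDot]
  | add y z _ _ hy hz =>
    simp only [hermDot] at hy hz ⊢
    simp only [Pi.add_apply, map_add, mul_add, sum_add_distrib, hy, hz, add_zero]
  | smul c y _ hy =>
    simp only [hermDot] at hy ⊢
    simp only [Pi.smul_apply, smul_eq_mul, map_mul, mul_left_comm _ (σ c), ← mul_sum, hy,
      mul_zero]

section Graph

variable {m : Type*} [Fintype m] [DecidableEq m]

theorem mem_span_fromCols_one_iff (A : Matrix m m F) (x : m ⊕ m → F) :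
    x ∈ Submodule.span F (Set.range fun i => fromCols (1 : Matrix m m F) A i) ↔
      ∃ u, Sum.elim u (u ᵥ* A) = x := by
  change x ∈ Submodule.span F (Set.range (fromCols (1 : Matrix m m F) A).row) ↔ _
  simp [← range_vecMulLinear]

theorem hermDot_fromCols_one (A : Matrix m m F) (x : m ⊕ m → F) (k : m) :
    hermDot σ x (fromCols 1 A k) = x (Sum.inl k) + ((x ∘ Sum.inr) ᵥ* (A.map σ)ᵀ) k := by
  simp [hermDot, Fintype.sum_sum_type, one_apply, vecMul, dotProduct]

theorem span_fromCols_one_eq_hermDual_iff (A : Matrix m m F) :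
    (Submodule.span F (Set.range fun i => fromCols (1 : Matrix m m F) A i) : Set (m ⊕ m → F)) =
        hermDual σ (Submodule.span F (Set.range fun i => fromCols (1 : Matrix m m F) A i)) ↔
      A * (A.map σ)ᵀ = -1 := by
  set B := (A.map σ)ᵀ
  have hdual : ∀ x, x ∈ hermDual σ (Submodule.span F
      (Set.range fun i => fromCols (1 : Matrix m m F) A i)) ↔
      x ∘ Sum.inl + (x ∘ Sum.inr) ᵥ* B = 0 := fun x => by
    rw [mem_hermDual_span_iff, funext_iff]
    simp [hermDot_fromCols_one, B]
  have hgraph : ∀ u, Sum.elim u (u ᵥ* A) ∈ hermDual σ (Submodule.span F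
      (Set.range fun i => fromCols (1 : Matrix m m F) A i)) ↔ u ᵥ* (1 + A * B) = 0 := fun u => by
    rw [hdual, Sum.elim_comp_inl, Sum.elim_comp_inr, vecMul_add, vecMul_one, vecMul_vecMul]
  constructor
  · intro h
    refine eq_neg_of_add_eq_zero_right (ext fun i j => ?_)
    have hi := (hgraph (Pi.single i 1)).1 (h ▸ (mem_span_fromCols_one_iff A _).2 ⟨_, rfl⟩)
    simpa [single_one_vecMul] using congrFun hi j
  · intro h
    have hBA : B * A = -1 := by
      have hinv : B * -A = 1 := mul_eq_one_comm.1 (by rw [neg_mul, h, neg_neg])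
      rwa [mul_neg, neg_eq_iff_eq_neg] at hinv
    ext x
    refine ⟨fun hx => ?_, fun hx => (mem_span_fromCols_one_iff A x).2 ⟨x ∘ Sum.inl, ?_⟩⟩
    · obtain ⟨u, rfl⟩ := (mem_span_fromCols_one_iff A x).1 hx
      rw [hgraph, h, add_neg_cancel, vecMul_zero]
    · have hinl := eq_neg_of_add_eq_zero_left ((hdual x).1 hx)
      rw [hinl, neg_vecMul, vecMul_vecMul, hBA, vecMul_neg, vecMul_one, neg_neg, ← hinl,
        Sum.elim_comp_inl_inr]

end Graph

variable {σ} {n : ℕ}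

theorem map_hermDot {ι : Type*} [Fintype ι] (hσ : Function.Involutive σ) (x y : ι → F) :
    σ (hermDot σ x y) = hermDot σ y x := by
  simp only [hermDot, map_sum, map_mul, hσ _, mul_comm]

theorem hermDot_twistShift {l : F} (hl : l * σ l = 1) (u v : Fin n → F) :
    hermDot σ (twistShift l u) (twistShift l v) = hermDot σ u v := by
  cases n with
  | zero => simp [hermDot]
  | succ m =>
    rw [hermDot, hermDot, Fin.sum_univ_succ, Fin.sum_univ_castSucc]
    simp only [twistShift, Fin.coe_ofNat_eq_mod, Nat.zero_mod, ↓reduceDIte, add_tsub_cancel_right,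
      map_mul, Fin.val_succ, Nat.add_eq_zero_iff, one_ne_zero, and_false]
    rw [add_comm, mul_mul_mul_comm, hl, one_mul]
    rfl
theorem hermDot_iterate_twistShift {l : F} (hl : l * σ l = 1) (i : ℕ) (u v : Fin n → F) :
    hermDot σ ((twistShift l)^[i] u) ((twistShift l)^[i] v) = hermDot σ u v := by
  induction i with
  | zero => rfl
  | succ i ih => rw [Function.iterate_succ_apply', Function.iterate_succ_apply',
      hermDot_twistShift hl, ih]

theorem hermDot_iterate_iterate_of_le {l : F} (hl : l * σ l = 1) (v : Fin n → F) {i k : ℕ}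
    (hik : i ≤ k) :
    hermDot σ ((twistShift l)^[i] v) ((twistShift l)^[k] v) =
      hermDot σ v ((twistShift l)^[k - i] v) := by
  rw [← Nat.add_sub_cancel' hik, Function.iterate_add_apply, hermDot_iterate_twistShift hl,
    Nat.add_sub_cancel_left]

theorem hermDot_iterate_eq_mul_map_sub {l : F} (hσ : Function.Involutive σ) (hl : l * σ l = 1)
    (v : Fin n → F) {d : ℕ} (hd : d ≤ n) :
    hermDot σ v ((twistShift l)^[d] v) = σ l * σ (hermDot σ v ((twistShift l)^[n - d] v)) := by
  calc hermDot σ v ((twistShift l)^[d] v)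
      = hermDot σ ((twistShift l)^[n - d] v) ((twistShift l)^[n - d + d] v) := by
        rw [Function.iterate_add_apply, hermDot_iterate_twistShift hl]
    _ = hermDot σ ((twistShift l)^[n - d] v) fun j => l * v j := by
        rw [Nat.sub_add_cancel hd, iterate_twistShift_self]
    _ = σ l * σ (hermDot σ v ((twistShift l)^[n - d] v)) := by
        rw [map_hermDot hσ]
        simp only [hermDot, map_mul, mul_sum]
        exact sum_congr rfl fun j _ => by ring

theorem hermDot_iterate_eq_Theta (l : F) (a : ℕ → F) {d : ℕ} (hd : d ≤ n) :
    hermDot σ (fun j : Fin n => a j) ((twistShift l)^[d] fun j => a j) =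
      Theta n a (fun i => σ (a i)) d (σ l) := by
  simp only [hermDot, iterate_twistShift_apply l _ hd, dite_eq_ite]
  rw [Fin.sum_univ_eq_sum_range
      (fun j => a j * σ (if d ≤ j then a (j - d) else l * a (n + j - d))),
    ← sum_range_add_sum_Ico _ hd, add_comm, Theta, sum_Ico_eq_sum_range, sum_Ico_eq_sum_range,
    Nat.sub_sub_self hd, mul_sum]
  congr 1
  · refine sum_congr rfl fun i hi => ?_
    rw [mem_range] at hi
    rw [if_pos (by omega), Nat.mod_eq_of_lt (by omega), Nat.add_sub_cancel_left, add_comm]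
  · refine sum_congr rfl fun i hi => ?_
    rw [mem_range] at hi
    rw [if_neg (by omega), map_mul, mul_left_comm]
    congr 3
    · rw [show n - d + i + d = n + i by omega, Nat.add_mod_left, Nat.mod_eq_of_lt (hi.trans_le hd)]
    · congr 1; omega

theorem gram_iterate_twistShift_eq_neg_one_iff (hσ : Function.Involutive σ) {l : F}
    (hl : l * σ l = 1) (hn : 1 ≤ n) (v : Fin n → F) :
    (∀ i k : Fin n, hermDot σ ((twistShift l)^[i] v) ((twistShift l)^[k] v) =
        (-1 : Matrix (Fin n) (Fin n) F) i k) ↔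
      hermDot σ v v = -1 ∧ ∀ d, 1 ≤ d → d ≤ n / 2 → hermDot σ v ((twistShift l)^[d] v) = 0 := by
  constructor
  · intro h
    refine ⟨by simpa using h ⟨0, hn⟩ ⟨0, hn⟩, fun d hd1 hd2 => ?_⟩
    have hdn : d < n := by omega
    have h0d := h ⟨0, hn⟩ ⟨d, hdn⟩
    rw [Matrix.neg_apply, one_apply_ne (by simp [Fin.ext_iff]; omega), neg_zero] at h0d
    simpa [hermDot_iterate_iterate_of_le hl v (Nat.zero_le d)] using h0d
  · rintro ⟨h0, hsmall⟩
    have vanish : ∀ d, 1 ≤ d → d < n → hermDot σ v ((twistShift l)^[d] v) = 0 := by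
      intro d hd1 hdn
      by_cases hd : d ≤ n / 2
      · exact hsmall d hd1 hd
      · rw [hermDot_iterate_eq_mul_map_sub hσ hl v hdn.le, hsmall (n - d) (by omega) (by omega),
          map_zero, mul_zero]
    intro i k
    rcases lt_trichotomy i k with hik | rfl | hki
    · rw [hermDot_iterate_iterate_of_le hl v hik.le, vanish _ (by omega) (by omega), Matrix.neg_apply,
        one_apply_ne hik.ne, neg_zero]
    · rw [hermDot_iterate_iterate_of_le hl v le_rfl, Nat.sub_self, Function.iterate_zero, id, h0,
        Matrix.neg_apply, one_apply_eq]
    · rw [← map_hermDot hσ, hermDot_iterate_iterate_of_le hl v hki.le, vanish _ (by omega) (by omega),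
        map_zero, Matrix.neg_apply, one_apply_ne hki.ne', neg_zero]

end Hermitian

theorem stmt6 {F : Type*} [Field F] (σ : F ≃+* F) (hσ : Function.Involutive σ)
    (n : ℕ) (hn : 1 ≤ n) (a : ℕ → F) (l : F) (hl : l * σ l = 1) :
    (Submodule.span F
        (Set.range fun i => Matrix.fromCols (1 : Matrix (Fin n) (Fin n) F) (circ n l a) i)
        : Set (Fin n ⊕ Fin n → F))
      = {x | ∀ y ∈ Submodule.span F
          (Set.range fun i => Matrix.fromCols (1 : Matrix (Fin n) (Fin n) F) (circ n l a) i),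
          ∑ c, x c * σ (y c) = 0}
    ↔ (Theta n a (fun i => σ (a i)) 0 (σ l) = -1
        ∧ ∀ j, 1 ≤ j → j ≤ n / 2 → Theta n a (fun i => σ (a i)) j (σ l) = 0) := by
  have hΘ : ∀ d ≤ n, hermDot σ (fun j : Fin n => a j) ((twistShift l)^[d] fun j => a j) =
      Theta n a (fun i => σ (a i)) d (σ l) := fun d hd => hermDot_iterate_eq_Theta l a hd
  rw [← hΘ 0 n.zero_le]
  refine (span_fromCols_one_eq_hermDual_iff σ (circ n l a)).trans ?_
  rw [← Matrix.ext_iff]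
  simp only [mul_map_transpose_apply, circ_row_eq_iterate]
  refine (gram_iterate_twistShift_eq_neg_one_iff hσ hl hn _).trans (and_congr Iff.rfl ?_)
  exact forall_congr' fun d => imp_congr_right fun _ => imp_congr_right fun hd => by
    rw [hΘ d (by omega)]
end

section
/- Let R be a commutative ring equipped with an involutive ring automorphism r ↦ r̄, let n ≥ 1, let a, b, c ∈ R^n, and let λ, μ ∈ R satisfy λ·λ̄ = 1 and μ·μ̄ = 1. Set A = circ_λ(a), B = circ_λ(b), C = circ_μ(c), let J be the n×n exchange matrix, and let X be the 2n×2n block matrix X = [[−A^T·C·J, −B̄], [B^T·C·J, −Ā]]. Then X·(X̄)^T = −I_{2n} if and only if A·(Ā)^T + B·(B̄)^T = −I_n and C·(C̄)^T = I_n. -/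
open Matrix

/-- The n×n exchange matrix. -/
def exch (R : Type*) [CommRing R] (n : ℕ) : Matrix (Fin n) (Fin n) R :=
  Matrix.of fun i j => if (i : ℕ) + (j : ℕ) = n - 1 then 1 else 0

private lemma mod2c {n x : ℕ} (hn : 0 < n) (hx : x < 2 * n) :
    ∃ r, x % n = r ∧ r < n ∧ (r = x ∨ r + n = x) := by
  refine ⟨x % n, rfl, Nat.mod_lt _ hn, ?_⟩
  rcases Nat.lt_or_ge x n with h | h
  · exact Or.inl (Nat.mod_eq_of_lt h)
  · right
    rw [Nat.mod_eq_sub_mod h, Nat.mod_eq_of_lt (by omega)]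
    omega

private lemma mod3c {n x : ℕ} (hn : 0 < n) (hx : x < 3 * n) :
    ∃ r, x % n = r ∧ r < n ∧ (r = x ∨ r + n = x ∨ r + 2 * n = x) := by
  refine ⟨x % n, rfl, Nat.mod_lt _ hn, ?_⟩
  rcases Nat.lt_or_ge x n with h | h
  · exact Or.inl (Nat.mod_eq_of_lt h)
  · obtain ⟨r, hr, hrlt, hrc⟩ := mod2c hn (show x - n < 2 * n by omega)
    rw [Nat.mod_eq_sub_mod h]
    omega

section Helpers

variable {R : Type*} [CommRing R]

private lemma circ_apply {n : ℕ} (hn : 0 < n) (l : R) (a : ℕ → R) (i j : Fin n) :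
    circ n l a i j = (if (i : ℕ) ≤ (j : ℕ) then 1 else l) * a (((j : ℕ) + n - (i : ℕ)) % n) := by
  have hi := i.isLt; have hj := j.isLt
  simp only [circ, of_apply]
  obtain ⟨r, hr, hrlt, hrc⟩ := mod2c hn (show (j : ℕ) + n - (i : ℕ) < 2 * n by omega)
  rw [hr]
  split_ifs with h
  · rw [one_mul]
    congr 1
    omega
  · congr 2
    omega

private lemma circ_comm {n : ℕ} (hn : 0 < n) (l : R) (a b : ℕ → R) :
    circ n l a * circ n l b = circ n l b * circ n l a := by
  ext i j
  simp only [mul_apply, circ_apply hn]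
  have hi := i.isLt; have hj := j.isLt
  have hmlt : ∀ x : ℕ, x % n < n := fun x => Nat.mod_lt _ hn
  refine Fintype.sum_equiv
    ⟨fun k => ⟨((i : ℕ) + j + n - k) % n, hmlt _⟩,
     fun k => ⟨((i : ℕ) + j + n - k) % n, hmlt _⟩, ?_, ?_⟩ _ _ ?_
  · intro k
    have hk := k.isLt
    apply Fin.ext
    dsimp only
    obtain ⟨r, hr, hrlt, hrc⟩ := mod3c hn (show (i : ℕ) + j + n - k < 3 * n by omega)
    rw [hr]
    obtain ⟨s, hs, hslt, hsc⟩ := mod3c hn (show (i : ℕ) + j + n - r < 3 * n by omega)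
    rw [hs]
    omega
  · intro k
    have hk := k.isLt
    apply Fin.ext
    dsimp only
    obtain ⟨r, hr, hrlt, hrc⟩ := mod3c hn (show (i : ℕ) + j + n - k < 3 * n by omega)
    rw [hr]
    obtain ⟨s, hs, hslt, hsc⟩ := mod3c hn (show (i : ℕ) + j + n - r < 3 * n by omega)
    rw [hs]
    omega
  · intro k
    have hk := k.isLt
    dsimp only [Equiv.coe_fn_mk]
    obtain ⟨K, hKr, hKlt, hKc⟩ := mod3c hn (show (i : ℕ) + j + n - k < 3 * n by omega)
    simp only [hKr]
    have I1 : (K + n - i) % n = ((j : ℕ) + n - k) % n := by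
      obtain ⟨u, hu, hult, huc⟩ := mod2c hn (show K + n - (i : ℕ) < 2 * n by omega)
      obtain ⟨v, hv, hvlt, hvc⟩ := mod2c hn (show (j : ℕ) + n - k < 2 * n by omega)
      rw [hu, hv]; omega
    have I2 : ((j : ℕ) + n - K) % n = ((k : ℕ) + n - i) % n := by
      obtain ⟨u, hu, hult, huc⟩ := mod2c hn (show (j : ℕ) + n - K < 2 * n by omega)
      obtain ⟨v, hv, hvlt, hvc⟩ := mod2c hn (show (k : ℕ) + n - i < 2 * n by omega)
      rw [hu, hv]; omega
    have hc : (if (i : ℕ) ≤ K then (1 : R) else l) * (if K ≤ (j : ℕ) then 1 else l)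
        = (if (i : ℕ) ≤ (k : ℕ) then 1 else l) * (if (k : ℕ) ≤ (j : ℕ) then 1 else l) := by
      have hpow : ∀ (p q : Prop) (_ : Decidable p) (_ : Decidable q),
          (if p then (1 : R) else l) * (if q then 1 else l)
            = l ^ ((if p then 0 else 1) + (if q then 0 else 1)) := by
        intros p q _ _
        split_ifs <;> simp [pow_succ]
      rw [hpow, hpow]
      congr 1
      split_ifs <;> omega
    rw [I1, I2]
    linear_combination (-(a (((k : ℕ) + n - i) % n) * b (((j : ℕ) + n - k) % n))) * hc

private lemma circ_transpose {n : ℕ} (σ : R ≃+* R) (l : R) (hl : l * σ l = 1) (a : ℕ → R) :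
    (circ n l a)ᵀ = circ n (σ l) (fun k => if k = 0 then a 0 else l * a (n - k)) := by
  ext i j
  have hi := i.isLt; have hj := j.isLt
  simp only [transpose_apply, circ, of_apply]
  rcases lt_trichotomy (i : ℕ) (j : ℕ) with h | h | h
  · rw [if_neg (by omega), if_pos (by omega), if_neg (by omega)]
    congr 2
    omega
  · rw [if_pos (by omega), if_pos (by omega), if_pos (by omega)]
    congr 1
    omega
  · rw [if_pos (by omega), if_neg (by omega), if_neg (by omega)]
    have h2 : n - (n + (j : ℕ) - i) = (i : ℕ) - j := by omega
    rw [h2, ← mul_assoc, mul_comm (σ l) l, hl, one_mul]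

private lemma circ_map {n : ℕ} (σ : R ≃+* R) (l : R) (a : ℕ → R) :
    (circ n l a).map σ = circ n (σ l) (fun k => σ (a k)) := by
  ext i j
  simp only [map_apply, circ, of_apply]
  split_ifs <;> simp [_root_.map_mul]

private lemma exch_mul_exch {n : ℕ} (hn : 0 < n) :
    exch R n * exch R n = (1 : Matrix (Fin n) (Fin n) R) := by
  ext i j
  have hi := i.isLt; have hj := j.isLt
  rw [mul_apply, Finset.sum_eq_single (⟨n - 1 - (i : ℕ), by omega⟩ : Fin n)]
  · simp only [exch, of_apply, one_apply]
    rw [if_pos (show (i : ℕ) + (n - 1 - (i : ℕ)) = n - 1 by omega), one_mul]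
    by_cases h : i = j
    · rw [if_pos (show (n - 1 - (i : ℕ)) + (j : ℕ) = n - 1 by subst h; omega), if_pos h]
    · rw [if_neg, if_neg h]
      intro hc
      exact h (Fin.ext (by omega))
  · intro k _ hk
    simp only [exch, of_apply]
    rw [if_neg, zero_mul]
    intro hc
    apply hk
    apply Fin.ext
    show (k : ℕ) = n - 1 - (i : ℕ)
    have := k.isLt
    omega
  · intro h
    exact absurd (Finset.mem_univ _) h

private lemma exch_transpose {n : ℕ} : (exch R n)ᵀ = exch R n := by
  ext i j
  simp only [transpose_apply, exch, of_apply]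
  rw [Nat.add_comm]

private lemma exch_map {n : ℕ} (σ : R ≃+* R) : (exch R n).map σ = exch R n := by
  ext i j
  simp only [map_apply, exch, of_apply]
  split_ifs <;> simp

end Helpers

theorem stmt8 {R : Type*} [CommRing R] (σ : R ≃+* R) (hσ : Function.Involutive σ)
    (n : ℕ) (hn : 1 ≤ n) (a b c : ℕ → R) (l m : R) (hl : l * σ l = 1) (hm : m * σ m = 1)
    (A B C : Matrix (Fin n) (Fin n) R) (hA : A = circ n l a) (hB : B = circ n l b)
    (hC : C = circ n m c) (J : Matrix (Fin n) (Fin n) R) (hJ : J = exch R n)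
    (X : Matrix (Fin n ⊕ Fin n) (Fin n ⊕ Fin n) R)
    (hX : X = Matrix.fromBlocks (-(Aᵀ * C * J)) (-(B.map σ)) (Bᵀ * C * J) (-(A.map σ))) :
    X * (X.map σ)ᵀ = -1
      ↔ (A * (A.map σ)ᵀ + B * (B.map σ)ᵀ = -1 ∧ C * (C.map σ)ᵀ = 1) := by
  have hn0 : 0 < n := hn
  have hl' : σ l * σ (σ l) = 1 := by rw [hσ l, mul_comm]; exact hl
  -- circulant descriptions
  have hAt := hA ▸ circ_transpose σ l hl a
  have hBt := hB ▸ circ_transpose σ l hl b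
  have hAm := hA ▸ circ_map σ l a
  have hBm := hB ▸ circ_map σ l b
  have hAmt : (A.map σ)ᵀ
      = circ n l (fun k => if k = 0 then σ (a 0) else σ l * σ (a (n - k))) := by
    rw [hAm, circ_transpose σ (σ l) hl', hσ l]
  have hBmt : (B.map σ)ᵀ
      = circ n l (fun k => if k = 0 then σ (b 0) else σ l * σ (b (n - k))) := by
    rw [hBm, circ_transpose σ (σ l) hl', hσ l]
  -- commutation facts
  have c1 : Aᵀ * (A.map σ) = (A.map σ) * Aᵀ := by rw [hAt, hAm]; exact circ_comm hn0 _ _ _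
  have c2 : Bᵀ * (B.map σ) = (B.map σ) * Bᵀ := by rw [hBt, hBm]; exact circ_comm hn0 _ _ _
  have c3 : Aᵀ * (B.map σ) = (B.map σ) * Aᵀ := by rw [hAt, hBm]; exact circ_comm hn0 _ _ _
  have c4 : Bᵀ * (A.map σ) = (A.map σ) * Bᵀ := by rw [hBt, hAm]; exact circ_comm hn0 _ _ _
  have c5 : A * (A.map σ)ᵀ = (A.map σ)ᵀ * A := by rw [hAmt, hA]; exact circ_comm hn0 _ _ _
  have c6 : B * (B.map σ)ᵀ = (B.map σ)ᵀ * B := by rw [hBmt, hB]; exact circ_comm hn0 _ _ _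
  -- J facts
  have hJ2 : J * J = 1 := by rw [hJ]; exact exch_mul_exch hn0
  have hJt : Jᵀ = J := by rw [hJ]; exact exch_transpose
  have hJm : J.map σ = J := by rw [hJ]; exact exch_map σ
  have hJJ : ∀ M : Matrix (Fin n) (Fin n) R, J * (J * M) = M := fun M => by
    rw [← mul_assoc, hJ2, one_mul]
  -- map is multiplicative / additive etc.
  have hmul : ∀ M N : Matrix (Fin n) (Fin n) R, (M * N).map σ = M.map σ * N.map σ := by
    intro M N
    ext i j
    simp [Matrix.map_apply, Matrix.mul_apply, map_sum, _root_.map_mul]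
  have hneg : ∀ M : Matrix (Fin n) (Fin n) R, (-M).map σ = -(M.map σ) := by
    intro M; ext i j; simp [Matrix.map_apply]
  have hmm : ∀ M : Matrix (Fin n) (Fin n) R, (M.map σ).map σ = M := by
    intro M
    rw [Matrix.map_map, show (⇑σ ∘ ⇑σ) = id from funext hσ, Matrix.map_id]
  -- block form of (X.map σ)ᵀ
  have hXmt : (X.map σ)ᵀ = Matrix.fromBlocks
      (-(J * ((C.map σ)ᵀ * (A.map σ)))) (J * ((C.map σ)ᵀ * (B.map σ)))
      (-Bᵀ) (-Aᵀ) := by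
    rw [hX, Matrix.fromBlocks_map, Matrix.fromBlocks_transpose, Matrix.fromBlocks_inj]
    refine ⟨?_, ?_, ?_, ?_⟩
    · rw [hneg, hmul, hmul, Matrix.transpose_map, hJm, transpose_neg, transpose_mul,
        transpose_mul, hJt, transpose_transpose]
    · rw [hmul, hmul, Matrix.transpose_map, hJm, transpose_mul, transpose_mul, hJt,
        transpose_transpose]
    · rw [hneg, hmm, transpose_neg]
    · rw [hneg, hmm, transpose_neg]
  have hneg1 : Matrix.fromBlocks (-1 : Matrix (Fin n) (Fin n) R) 0 0
      (-1 : Matrix (Fin n) (Fin n) R) = (-1 : Matrix (Fin n ⊕ Fin n) (Fin n ⊕ Fin n) R) := by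
    rw [show (0 : Matrix (Fin n) (Fin n) R) = -0 from neg_zero.symm, ← Matrix.fromBlocks_neg,
      Matrix.fromBlocks_one]
  constructor
  · -- forward direction
    intro h
    have h1 : X * (-(X.map σ)ᵀ) = 1 := by rw [mul_neg, h, neg_neg]
    have h2 : (-(X.map σ)ᵀ) * X = 1 := mul_eq_one_comm.mp h1
    rw [neg_mul] at h2
    have h3 : (X.map σ)ᵀ * X = -1 := by
      rw [← neg_neg ((X.map σ)ᵀ * X), h2]
    rw [hXmt, hX, Matrix.fromBlocks_multiply, ← hneg1, Matrix.fromBlocks_inj] at h3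
    obtain ⟨e1, -, -, e4⟩ := h3
    have e4' : Bᵀ * (B.map σ) + Aᵀ * (A.map σ) = -1 := by
      rwa [neg_mul_neg, neg_mul_neg] at e4
    have hsum : (A.map σ) * Aᵀ + (B.map σ) * Bᵀ = -1 := by
      rw [← c1, ← c2, add_comm]; exact e4'
    have e1' : (-(J * ((C.map σ)ᵀ * (A.map σ)))) * (-(Aᵀ * C * J))
        + (J * ((C.map σ)ᵀ * (B.map σ))) * (Bᵀ * C * J)
        = J * ((C.map σ)ᵀ * (((A.map σ) * Aᵀ + (B.map σ) * Bᵀ) * (C * J))) := by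
      noncomm_ring
    rw [e1', hsum] at e1
    have e1'' : (C.map σ)ᵀ * ((-1 : Matrix (Fin n) (Fin n) R) * (C * J))
        = -(((C.map σ)ᵀ * C) * J) := by noncomm_ring
    rw [e1'', mul_neg] at e1
    have e2 : J * (((C.map σ)ᵀ * C) * J) = 1 := by
      rw [← neg_neg (J * (((C.map σ)ᵀ * C) * J)), e1, neg_neg]
    have q1 : J * (J * (((C.map σ)ᵀ * C) * J)) = J * 1 := congrArg (fun Y => J * Y) e2
    rw [hJJ, mul_one] at q1
    have q2 : ((C.map σ)ᵀ * C) * (J * J) = J * J := by rw [← mul_assoc, q1]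
    rw [hJ2, mul_one] at q2
    have hCC : C * (C.map σ)ᵀ = 1 := mul_eq_one_comm.mp q2
    refine ⟨?_, hCC⟩
    have h1t : (B.map σ)ᵀ * B + (A.map σ)ᵀ * A = -1 := by
      have := congrArg Matrix.transpose e4'
      rwa [transpose_add, transpose_mul, transpose_mul, transpose_transpose,
        transpose_transpose, transpose_neg, transpose_one] at this
    rw [c5, c6, add_comm]
    exact h1t
  · -- backward direction
    rintro ⟨h1, h2⟩
    have h1t : (A.map σ) * Aᵀ + (B.map σ) * Bᵀ = -1 := by
      have := congrArg Matrix.transpose h1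
      rwa [transpose_add, transpose_mul, transpose_mul, transpose_transpose,
        transpose_transpose, transpose_neg, transpose_one] at this
    rw [hXmt, hX, Matrix.fromBlocks_multiply, ← hneg1, Matrix.fromBlocks_inj]
    refine ⟨?_, ?_, ?_, ?_⟩
    · have t1 : (-(Aᵀ * C * J)) * (-(J * ((C.map σ)ᵀ * (A.map σ))))
          = Aᵀ * (C * (J * (J * ((C.map σ)ᵀ * (A.map σ))))) := by noncomm_ring
      rw [t1, hJJ, show C * ((C.map σ)ᵀ * (A.map σ)) = (C * (C.map σ)ᵀ) * (A.map σ) from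
        (mul_assoc _ _ _).symm, h2, one_mul, neg_mul_neg, c1]
      exact h1t
    · have t2 : (-(Aᵀ * C * J)) * (J * ((C.map σ)ᵀ * (B.map σ)))
          = -(Aᵀ * (C * (J * (J * ((C.map σ)ᵀ * (B.map σ)))))) := by noncomm_ring
      rw [t2, hJJ, show C * ((C.map σ)ᵀ * (B.map σ)) = (C * (C.map σ)ᵀ) * (B.map σ) from
        (mul_assoc _ _ _).symm, h2, one_mul, neg_mul_neg, c3]
      exact neg_add_cancel _
    · have t3 : (Bᵀ * C * J) * (-(J * ((C.map σ)ᵀ * (A.map σ))))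
          = -(Bᵀ * (C * (J * (J * ((C.map σ)ᵀ * (A.map σ)))))) := by noncomm_ring
      rw [t3, hJJ, show C * ((C.map σ)ᵀ * (A.map σ)) = (C * (C.map σ)ᵀ) * (A.map σ) from
        (mul_assoc _ _ _).symm, h2, one_mul, neg_mul_neg, c4]
      exact neg_add_cancel _
    · have t4 : (Bᵀ * C * J) * (J * ((C.map σ)ᵀ * (B.map σ)))
          = Bᵀ * (C * (J * (J * ((C.map σ)ᵀ * (B.map σ))))) := by noncomm_ring
      rw [t4, hJJ, show C * ((C.map σ)ᵀ * (B.map σ)) = (C * (C.map σ)ᵀ) * (B.map σ) from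
        (mul_assoc _ _ _).symm, h2, one_mul, neg_mul_neg, c2, add_comm]
      exact h1t
end

section
/- Let R be a commutative ring equipped with an involutive ring automorphism r ↦ r̄, let n, k ≥ 1, let a_0,…,a_{k−1} ∈ R^n, and let λ, μ ∈ R satisfy λ·λ̄ = 1 and μ·μ̄ = 1. Set A_i = circ_μ(a_i) for each i and let X = circ_λ(A_0, A_1, …, A_{k−1}) be the kn×kn block λ-circulant matrix with these blocks. Then X·(X̄)^T = −I_{kn} if and only if all of the following hold: (i) Σ_{i=0}^{k−1} Θ(a_i, ā_i, 0) = −1 and Σ_{i=0}^{k−1} Θ(a_i, ā_i, t)[μ̄] = 0 for every t ∈ {1,…,⌊n/2⌋}; (ii) Σ_{i=0}^{k−j−1} Θ(a_{[i+j]_k}, ā_i, 0) + λ̄·Σ_{i=k−j}^{k−1} Θ(a_{[i+j]_k}, ā_i, 0) = 0 for every j ∈ {1,…,⌊k/2⌋}; (iii) Σ_{i=0}^{k−j−1} Θ(a_{[i+j]_k}, ā_i, t)[μ̄] + λ̄·Σ_{i=k−j}^{k−1} Θ(a_{[i+j]_k}, ā_i, t)[μ̄] = 0 for every j ∈ {1,…,k−1}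 and every t ∈ {1,…,⌊n/2⌋}. -/
open Matrix

/-- The kn×kn block λ-circulant matrix with n×n blocks `A 0, …, A (k-1)`: its (r,s) block
is `A (s - r)` if `r ≤ s` and `λ • A (k + s - r)` otherwise. -/
def blockCirc {R : Type*} [CommRing R] (k n : ℕ) (l : R) (A : ℕ → Matrix (Fin n) (Fin n) R) :
    Matrix (Fin k × Fin n) (Fin k × Fin n) R :=
  Matrix.of fun p q =>
    if (p.1 : ℕ) ≤ (q.1 : ℕ) then A ((q.1 : ℕ) - p.1) p.2 q.2
    else l * A (k + q.1 - p.1) p.2 q.2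

section Aux

open Finset

variable {R : Type*} [CommRing R] {S : Type*} [Ring S] [Algebra R S]

/-- convolution coefficient -/
def convC (k : ℕ) (l' : R) (x y : ℕ → S) (j : ℕ) : S :=
  (∑ i ∈ Finset.range (k - j), x ((i + j) % k) * y i)
    + l' • ∑ i ∈ Finset.Ico (k - j) k, x ((i + j) % k) * y i

lemma key (k : ℕ) (l l' : R) (hl : l * l' = 1) (x y : ℕ → S) (r u : Fin k) :
    ∑ s : Fin k,
        (if (r : ℕ) ≤ (s : ℕ) then x ((s : ℕ) - r) else l • x (k + s - r)) *
          (if (u : ℕ) ≤ (s : ℕ) then y ((s : ℕ) - u) else l' • y (k + s - u))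
      = if (r : ℕ) ≤ (u : ℕ) then convC k l' x y ((u : ℕ) - r)
        else l • convC k l' x y (k + u - r) := by
  obtain ⟨rr, hr⟩ := r
  obtain ⟨uu, hu⟩ := u
  simp only [Fin.val_mk]
  set f : ℕ → S := fun s =>
    (if rr ≤ s then x (s - rr) else l • x (k + s - rr)) *
      (if uu ≤ s then y (s - uu) else l' • y (k + s - uu)) with hf
  rw [Fin.sum_univ_eq_sum_range f]
  rcases le_or_gt rr uu with h | h
  · rw [if_pos h]
    set g : ℕ → S := fun i => x ((i + (uu - rr)) % k) * y i with hg
    have lsplit : ∑ s ∈ range k, f s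
        = ((∑ i ∈ range rr, f i) + ∑ i ∈ range (uu - rr), f (rr + i))
          + ∑ i ∈ range (k - uu), f (uu + i) := by
      rw [range_eq_Ico, ← Finset.sum_Ico_consecutive f (Nat.zero_le uu) hu.le,
        ← Finset.sum_Ico_consecutive f (Nat.zero_le rr) h]
      simp only [Finset.sum_Ico_eq_sum_range, Nat.sub_zero, zero_add]
    have rsplit : convC k l' x y (uu - rr)
        = ((∑ i ∈ range (k - uu), g i) + ∑ i ∈ range rr, g (k - uu + i))
          + l' • ∑ i ∈ range (uu - rr), g (k - (uu - rr) + i) := by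
      unfold convC
      rw [← hg, range_eq_Ico,
        ← Finset.sum_Ico_consecutive g (Nat.zero_le (k - uu)) (by omega : k - uu ≤ k - (uu - rr))]
      simp only [Finset.sum_Ico_eq_sum_range, Nat.sub_zero, zero_add,
        show k - (uu - rr) - (k - uu) = rr by omega,
        show k - (k - (uu - rr)) = uu - rr by omega]
    rw [lsplit, rsplit]
    have e1 : ∀ i ∈ range rr, f i = g (k - uu + i) := by
      intro i hi
      rw [Finset.mem_range] at hi
      simp only [hf, hg]
      rw [if_neg (by omega), if_neg (by omega), smul_mul_smul_comm, hl, one_smul,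
        show k - uu + i + (uu - rr) = k + i - rr by omega,
        Nat.mod_eq_of_lt (by omega), show k - uu + i = k + i - uu by omega]
    have e2 : ∀ i ∈ range (uu - rr), f (rr + i) = l' • g (k - (uu - rr) + i) := by
      intro i hi
      rw [Finset.mem_range] at hi
      simp only [hf, hg]
      rw [if_pos (by omega), if_neg (by omega),
        show k - (uu - rr) + i + (uu - rr) = k + i by omega, Nat.add_mod_left,
        Nat.mod_eq_of_lt (by omega), mul_smul_comm,
        show rr + i - rr = i by omega, show k + (rr + i) - uu = k - (uu - rr) + i by omega]
    have e3 : ∀ i ∈ range (k - uu), f (uu + i) = g i := by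
      intro i hi
      rw [Finset.mem_range] at hi
      simp only [hf, hg]
      rw [if_pos (by omega), if_pos (by omega), Nat.mod_eq_of_lt (by omega),
        show uu + i - rr = i + (uu - rr) by omega, show uu + i - uu = i by omega]
    rw [Finset.sum_congr rfl e1, Finset.sum_congr rfl e2, Finset.sum_congr rfl e3,
      ← Finset.smul_sum]
    abel
  · rw [if_neg (by omega)]
    set g : ℕ → S := fun i => x ((i + (k + uu - rr)) % k) * y i with hg
    have lsplit : ∑ s ∈ range k, f s
        = ((∑ i ∈ range uu, f i) + ∑ i ∈ range (rr - uu), f (uu + i))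
          + ∑ i ∈ range (k - rr), f (rr + i) := by
      rw [range_eq_Ico, ← Finset.sum_Ico_consecutive f (Nat.zero_le rr) hr.le,
        ← Finset.sum_Ico_consecutive f (Nat.zero_le uu) h.le]
      simp only [Finset.sum_Ico_eq_sum_range, Nat.sub_zero, zero_add]
    have rsplit : l • convC k l' x y (k + uu - rr)
        = (l • ∑ i ∈ range (rr - uu), g i)
          + ((∑ i ∈ range (k - rr), g (rr - uu + i)) + ∑ i ∈ range uu, g (k - uu + i)) := by
      unfold convC
      rw [← hg, show k - (k + uu - rr) = rr - uu by omega, range_eq_Ico,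
        ← Finset.sum_Ico_consecutive g (by omega : rr - uu ≤ k - uu) (by omega : k - uu ≤ k),
        smul_add, smul_smul, hl, one_smul]
      simp only [Finset.sum_Ico_eq_sum_range, Nat.sub_zero, zero_add,
        show k - uu - (rr - uu) = k - rr by omega, show k - (k - uu) = uu by omega]

    rw [lsplit, rsplit]
    have e1 : ∀ i ∈ range uu, f i = g (k - uu + i) := by
      intro i hi
      rw [Finset.mem_range] at hi
      simp only [hf, hg]
      rw [if_neg (by omega), if_neg (by omega), smul_mul_smul_comm, hl, one_smul,
        show k - uu + i + (k + uu - rr) = k + (k + i - rr) by omega, Nat.add_mod_left,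
        Nat.mod_eq_of_lt (by omega), show k - uu + i = k + i - uu by omega]
    have e2 : ∀ i ∈ range (rr - uu), f (uu + i) = l • g i := by
      intro i hi
      rw [Finset.mem_range] at hi
      simp only [hf, hg]
      rw [if_neg (by omega), if_pos (by omega), smul_mul_assoc,
        Nat.mod_eq_of_lt (by omega : i + (k + uu - rr) < k),
        show k + (uu + i) - rr = i + (k + uu - rr) by omega,
        show uu + i - uu = i by omega]
    have e3 : ∀ i ∈ range (k - rr), f (rr + i) = g (rr - uu + i) := by
      intro i hi
      rw [Finset.mem_range] at hi
      simp only [hf, hg]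
      rw [if_pos (by omega), if_pos (by omega),
        show rr - uu + i + (k + uu - rr) = k + i by omega, Nat.add_mod_left,
        Nat.mod_eq_of_lt (by omega), show rr + i - rr = i by omega,
        show rr + i - uu = rr - uu + i by omega]
    rw [Finset.sum_congr rfl e1, Finset.sum_congr rfl e2, Finset.sum_congr rfl e3,
      ← Finset.smul_sum]
    abel

lemma theta_eq_convC (n : ℕ) (w : R) (x y : ℕ → R) (j : ℕ) :
    Theta n x y j w = convC n w x y j := by
  simp [Theta, convC, smul_eq_mul]

lemma circ_mul (σ : R ≃+* R) (n : ℕ) (m : R) (hm : m * σ m = 1) (x y : ℕ → R) :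
    circ n m x * ((circ n m y).map σ)ᵀ
      = circ n m fun t => Theta n x (fun s => σ (y s)) t (σ m) := by
  ext p v
  rw [Matrix.mul_apply]
  have hkey := key n m (σ m) hm x (fun s => σ (y s)) p v
  simp only [smul_eq_mul] at hkey
  have e : ∀ q : Fin n, circ n m x p q * ((circ n m y).map σ)ᵀ q v
      = (if (p : ℕ) ≤ (q : ℕ) then x ((q : ℕ) - p) else m * x (n + q - p)) *
        (if (v : ℕ) ≤ (q : ℕ) then σ (y ((q : ℕ) - v)) else σ m * σ (y (n + q - v))) := by
    intro q
    simp only [circ, Matrix.transpose_apply, Matrix.map_apply, Matrix.of_apply, apply_ite σ, _root_.map_mul]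
  rw [Finset.sum_congr rfl fun q _ => e q, hkey]
  simp only [circ, Matrix.of_apply, theta_eq_convC]

lemma circ_linear (n : ℕ) (m cc : R) (f g : ℕ → ℕ → R) (s1 s2 : Finset ℕ) :
    (∑ i ∈ s1, circ n m (f i)) + cc • ∑ i ∈ s2, circ n m (g i)
      = circ n m fun t => (∑ i ∈ s1, f i t) + cc * ∑ i ∈ s2, g i t := by
  ext p v
  simp only [Matrix.add_apply, Matrix.smul_apply, Matrix.sum_apply, circ, Matrix.of_apply,
    smul_eq_mul]
  by_cases h : (p : ℕ) ≤ (v : ℕ) <;>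
    simp [h, Finset.mul_sum, mul_add, mul_left_comm]

lemma blockCirc_mul (σ : R ≃+* R) (k n : ℕ) (l : R) (hl : l * σ l = 1)
    (A B : ℕ → Matrix (Fin n) (Fin n) R) :
    blockCirc k n l A * ((blockCirc k n l B).map σ)ᵀ
      = blockCirc k n l fun j => convC k (σ l) A (fun i => ((B i).map σ)ᵀ) j := by
  ext ⟨r, p⟩ ⟨u, v⟩
  rw [Matrix.mul_apply, Fintype.sum_prod_type]
  have e : ∀ s : Fin k,
      ∑ q : Fin n, blockCirc k n l A (r, p) (s, q) * ((blockCirc k n l B).map σ)ᵀ (s, q) (u, v)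
      = ((if (r : ℕ) ≤ (s : ℕ) then A ((s : ℕ) - r) else l • A (k + s - r)) *
         (if (u : ℕ) ≤ (s : ℕ) then ((B ((s : ℕ) - u)).map σ)ᵀ
          else (σ l) • ((B (k + s - u)).map σ)ᵀ)) p v := by
    intro s
    rw [Matrix.mul_apply]
    refine Finset.sum_congr rfl fun q _ => ?_
    simp only [blockCirc, Matrix.of_apply, Matrix.transpose_apply, Matrix.map_apply,
      apply_ite σ, _root_.map_mul, Matrix.smul_apply, smul_eq_mul,
      apply_ite (fun M : Matrix (Fin n) (Fin n) R => M p q),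
      apply_ite (fun M : Matrix (Fin n) (Fin n) R => M q v)]
  rw [Finset.sum_congr rfl fun s _ => e s, ← Matrix.sum_apply,
    key k l (σ l) hl A (fun i => ((B i).map σ)ᵀ) r u]
  simp only [blockCirc, Matrix.of_apply,
    apply_ite (fun M : Matrix (Fin n) (Fin n) R => M p v), Matrix.smul_apply, smul_eq_mul]

lemma blockCirc_circ_entry (k n : ℕ) (l m : R) (c : ℕ → ℕ → R) {r p u v : ℕ}
    (hr : r < k) (hp : p < n) (hu : u < k) (hv : v < n) :
    blockCirc k n l (fun j => circ n m (c j)) (⟨r, hr⟩, ⟨p, hp⟩) (⟨u, hu⟩, ⟨v, hv⟩)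
      = if r ≤ u then (if p ≤ v then c (u - r) (v - p) else m * c (u - r) (n + v - p))
        else l * (if p ≤ v then c (k + u - r) (v - p) else m * c (k + u - r) (n + v - p)) :=
  rfl

lemma neg_one_entry (k n : ℕ) {r p u v : ℕ}
    (hr : r < k) (hp : p < n) (hu : u < k) (hv : v < n) :
    (-1 : Matrix (Fin k × Fin n) (Fin k × Fin n) R) (⟨r, hr⟩, ⟨p, hp⟩) (⟨u, hu⟩, ⟨v, hv⟩)
      = if r = u ∧ p = v then -1 else 0 := by
  simp [Matrix.neg_apply, Matrix.one_apply, Prod.ext_iff, Fin.mk.injEq]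
  split_ifs with h1 h2 h2 <;> simp_all

lemma blockCirc_circ_eq_neg_one_iff (k n : ℕ) (hk : 1 ≤ k) (hn : 1 ≤ n) (l m : R)
    (c : ℕ → ℕ → R) :
    blockCirc k n l (fun j => circ n m (c j)) = -1
      ↔ ∀ j, j < k → ∀ t, t < n → c j t = if j = 0 ∧ t = 0 then -1 else 0 := by
  constructor
  · intro hM j hj t ht
    have := congrArg (fun M : Matrix (Fin k × Fin n) (Fin k × Fin n) R =>
      M (⟨0, hk⟩, ⟨0, hn⟩) (⟨j, hj⟩, ⟨t, ht⟩)) hM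
    simp only [blockCirc_circ_entry, neg_one_entry] at this
    rw [if_pos (Nat.zero_le _), if_pos (Nat.zero_le _)] at this
    simpa [eq_comm] using this
  · intro h
    ext pq uv
    obtain ⟨⟨r, hr⟩, ⟨p, hp⟩⟩ := pq
    obtain ⟨⟨u, hu⟩, ⟨v, hv⟩⟩ := uv
    rw [blockCirc_circ_entry, neg_one_entry]
    split_ifs with h1 h2 h3 h2 h3 h3 <;>
      first
        | (rw [h _ (by omega) _ (by omega)]; split_ifs <;> first | rfl | omega | ring)
        | (rw [h _ (by omega) _ (by omega)]; rw [if_neg (by omega)]; ring)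

lemma herm (σ : R ≃+* R) (hσ : Function.Involutive σ) {I : Type*} [Fintype I]
    (X : Matrix I I R) :
    ((X * (X.map σ)ᵀ).map σ)ᵀ = X * (X.map σ)ᵀ := by
  have hdouble : ∀ Y : Matrix I I R, (Y.map σ).map σ = Y := by
    intro Y; ext i j; simp [Matrix.map_apply, hσ (Y i j)]
  have h1 : (X * (X.map σ)ᵀ).map σ = X.map σ * (((X.map σ)ᵀ).map σ) :=
    Matrix.map_mul (f := (σ : R →+* R))
  have h2 : ((X.map σ)ᵀ).map σ = Xᵀ := by
    ext i j; simp [Matrix.map_apply, hσ (X j i)]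
  rw [h1, h2, Matrix.transpose_mul, Matrix.transpose_transpose]

end Aux

theorem stmt10 {R : Type*} [CommRing R] (σ : R ≃+* R) (hσ : Function.Involutive σ)
    (n k : ℕ) (hn : 1 ≤ n) (hk : 1 ≤ k) (a : ℕ → ℕ → R)
    (l m : R) (hl : l * σ l = 1) (hm : m * σ m = 1)
    (X : Matrix (Fin k × Fin n) (Fin k × Fin n) R)
    (hX : X = blockCirc k n l (fun i => circ n m (a i))) :
    X * (X.map σ)ᵀ = -1
      ↔ ((∑ i ∈ Finset.range k, Theta n (a i) (fun s => σ (a i s)) 0 (σ m) = -1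
            ∧ ∀ t, 1 ≤ t → t ≤ n / 2 →
                ∑ i ∈ Finset.range k, Theta n (a i) (fun s => σ (a i s)) t (σ m) = 0)
          ∧ (∀ j, 1 ≤ j → j ≤ k / 2 →
              (∑ i ∈ Finset.range (k - j),
                  Theta n (a ((i + j) % k)) (fun s => σ (a i s)) 0 (σ m))
                + σ l * ∑ i ∈ Finset.Ico (k - j) k,
                    Theta n (a ((i + j) % k)) (fun s => σ (a i s)) 0 (σ m) = 0)
          ∧ ∀ j, 1 ≤ j → j ≤ k - 1 → ∀ t, 1 ≤ t → t ≤ n / 2 →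
              (∑ i ∈ Finset.range (k - j),
                  Theta n (a ((i + j) % k)) (fun s => σ (a i s)) t (σ m))
                + σ l * ∑ i ∈ Finset.Ico (k - j) k,
                    Theta n (a ((i + j) % k)) (fun s => σ (a i s)) t (σ m) = 0) := by
  set c : ℕ → ℕ → R := fun j t =>
    (∑ i ∈ Finset.range (k - j),
        Theta n (a ((i + j) % k)) (fun s => σ (a i s)) t (σ m))
      + σ l * ∑ i ∈ Finset.Ico (k - j) k,
          Theta n (a ((i + j) % k)) (fun s => σ (a i s)) t (σ m) with hc
  -- the product is a block circulant of circulants of c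
  have hCj : ∀ j, convC k (σ l) (fun i => circ n m (a i))
      (fun i => ((circ n m (a i)).map σ)ᵀ) j = circ n m (c j) := by
    intro j
    unfold convC
    simp only []
    rw [Finset.sum_congr rfl fun i _ => circ_mul σ n m hm (a ((i + j) % k)) (a i),
      Finset.sum_congr rfl fun i _ => circ_mul σ n m hm (a ((i + j) % k)) (a i),
      circ_linear]
  have hM : X * (X.map σ)ᵀ = blockCirc k n l (fun j => circ n m (c j)) := by
    rw [hX, blockCirc_mul σ k n l hl]
    exact congrArg (blockCirc k n l) (funext hCj)
  -- rewriting c 0 in the statement form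
  have hc0 : ∀ t, c 0 t = ∑ i ∈ Finset.range k, Theta n (a i) (fun s => σ (a i s)) t (σ m) := by
    intro t
    rw [hc]
    simp only [Nat.sub_zero, Finset.Ico_self, Finset.sum_empty, mul_zero, add_zero]
    refine Finset.sum_congr rfl fun i hi => ?_
    rw [Nat.mod_eq_of_lt (Finset.mem_range.mp hi)]
  -- hermitian symmetry of the product
  have hH : ((blockCirc k n l (fun j => circ n m (c j))).map σ)ᵀ
      = blockCirc k n l (fun j => circ n m (c j)) := by
    rw [← hM]; exact herm σ hσ X
  have hsym : ∀ pq uv : Fin k × Fin n,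
      σ ((blockCirc k n l (fun j => circ n m (c j))) uv pq)
        = (blockCirc k n l (fun j => circ n m (c j))) pq uv := by
    intro pq uv
    have := congrArg (fun M : Matrix (Fin k × Fin n) (Fin k × Fin n) R => M pq uv) hH
    simpa [Matrix.transpose_apply, Matrix.map_apply] using this
  -- mirror lemmas
  have F1 : ∀ t, 1 ≤ t → t < n → c 0 (n - t) = 0 → c 0 t = 0 := by
    intro t h1 h2 h0
    have e := hsym (⟨0, hk⟩, ⟨0, hn⟩) (⟨0, hk⟩, ⟨t, h2⟩)
    rw [blockCirc_circ_entry, blockCirc_circ_entry] at e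
    rw [if_pos (le_refl 0), if_neg (by omega), if_pos (le_refl 0), if_pos (by omega)] at e
    rw [show n + 0 - t = n - t by omega, h0, mul_zero, map_zero] at e
    simpa using e.symm
  have F2 : ∀ j, 1 ≤ j → j < k → c (k - j) 0 = 0 → c j 0 = 0 := by
    intro j h1 h2 h0
    have e := hsym (⟨0, hk⟩, ⟨0, hn⟩) (⟨j, h2⟩, ⟨0, hn⟩)
    rw [blockCirc_circ_entry, blockCirc_circ_entry] at e
    rw [if_neg (by omega), if_pos (le_refl 0), if_pos (by omega), if_pos (le_refl 0)] at e
    rw [show k + 0 - j = k - j by omega, h0, mul_zero, map_zero] at e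
    simpa using e.symm
  have F3 : ∀ j t, 1 ≤ j → j < k → 1 ≤ t → t < n → c (k - j) (n - t) = 0 → c j t = 0 := by
    intro j t h1 h2 h3 h4 h0
    have e := hsym (⟨0, hk⟩, ⟨0, hn⟩) (⟨j, h2⟩, ⟨t, h4⟩)
    rw [blockCirc_circ_entry, blockCirc_circ_entry] at e
    rw [if_neg (by omega), if_neg (by omega), if_pos (by omega), if_pos (by omega)] at e
    rw [show k + 0 - j = k - j by omega, show n + 0 - t = n - t by omega, h0,
      mul_zero, mul_zero, map_zero] at e
    simpa using e.symm
  rw [hM, blockCirc_circ_eq_neg_one_iff k n hk hn l m c]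
  constructor
  · intro H
    refine ⟨⟨?_, ?_⟩, ?_, ?_⟩
    · rw [← hc0 0]
      simpa using H 0 (by omega) 0 (by omega)
    · intro t h1 h2
      rw [← hc0 t]
      have := H 0 (by omega) t (by omega)
      rwa [if_neg (by omega)] at this
    · intro j h1 h2
      have := H j (by omega) 0 (by omega)
      rwa [if_neg (by omega)] at this
    · intro j h1 h2 t h3 h4
      have := H j (by omega) t (by omega)
      rwa [if_neg (by omega)] at this
  · rintro ⟨⟨h1, h2⟩, h3, h4⟩ j hj t ht
    rcases Nat.eq_zero_or_pos j with rfl | hj1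
    · rcases Nat.eq_zero_or_pos t with rfl | ht1
      · rw [if_pos ⟨rfl, rfl⟩, hc0 0]; exact h1
      · rw [if_neg (by omega)]
        rcases le_or_gt t (n / 2) with h | h
        · rw [hc0 t]; exact h2 t (by omega) h
        · exact F1 t (by omega) ht (by rw [hc0 (n - t)]; exact h2 (n - t) (by omega) (by omega))
    · rcases Nat.eq_zero_or_pos t with rfl | ht1
      · rw [if_neg (by omega)]
        rcases le_or_gt j (k / 2) with h | h
        · exact h3 j (by omega) h
        · exact F2 j (by omega) hj (h3 (k - j) (by omega) (by omega))
      · rw [if_neg (by omega)]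
        rcases le_or_gt t (n / 2) with h | h
        · exact h4 j (by omega) (by omega) t (by omega) h
        · exact F3 j t (by omega) hj (by omega) ht
            (h4 (k - j) (by omega) (by omega) (n - t) (by omega) (by omega))
end

section
/- Let R be a commutative ring equipped with an involutive ring automorphism r ↦ r̄, let n, k ≥ 1, let A_0,…,A_{k−1} be n×n matrices over R, let λ ∈ R satisfy λ·λ̄ = 1, and let X = circ_λ(A_0, A_1, …, A_{k−1}) be the kn×kn block λ-circulant matrix with these blocks. Then X·(X̄)^T = −I_{kn} if and only if Σ_{i=0}^{k−1} A_i·(Ā_i)^T = −I_n and, for every j ∈ {1,…,k−1}, Σ_{i=0}^{k−j−1} A_{[i+j]_k}·(Ā_i)^T + λ̄·Σ_{i=k−j}^{k−1} A_{[i+j]_k}·(Ā_i)^T = 0, where [m]_k denotes m mod k. -/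
open Matrix

/-!
Write the `(r, s)` block of `X` as `c(r, s) • A ((s - r) mod k)`, where `c(r, s)` is `1` on and
above the block diagonal and `λ` below it. Substituting `s = i + t` (mod `k`) in the `(r, t)` block
of `X * X̄ᵀ` shows that `X * X̄ᵀ` is again block λ-circulant, with `j`-th block the sum `C_j` of the
theorem: the weights combine to `c(r, t)` times `1` or `λ̄`, since `λ λ̄ = 1` cancels whenever both
factors lie below the diagonal. Finally, a block λ-circulant matrix is `-1` exactly when its first
block row is `(-1, 0, …, 0)`.
-/

open Finset

theorem Fin.val_sub_eq_ite {k : ℕ} (a b : Fin k) :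
    ((a - b : Fin k) : ℕ) = if (b : ℕ) ≤ a then (a : ℕ) - b else k + a - b := by
  split_ifs with h
  · exact Fin.sub_val_of_le h
  · exact Fin.coe_sub_iff_lt.2 (not_le.1 h)

section

variable {R F : Type*} [CommRing R] [FunLike F R R] {n k : ℕ}

def circCoeff (l : R) (r s : Fin k) : R := if r ≤ s then 1 else l

def circBlock (l : R) (A : ℕ → Matrix (Fin n) (Fin n) R) (r s : Fin k) :
    Matrix (Fin n) (Fin n) R :=
  circCoeff l r s • A (s - r : Fin k)

theorem blockCirc_apply (l : R) (A : ℕ → Matrix (Fin n) (Fin n) R) (r s : Fin k) (x y : Fin n) :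
    blockCirc k n l A (r, x) (s, y) = circBlock l A r s x y := by
  simp only [blockCirc, of_apply, circBlock, circCoeff, Matrix.smul_apply, smul_eq_mul,
    Fin.val_sub_eq_ite, Fin.le_iff_val_le_val]
  split_ifs <;> simp

theorem circCoeff_mul_map_circCoeff [MonoidHomClass F R R] (σ : F) {l : R} (hl : l * σ l = 1)
    (r t i : Fin k) :
    circCoeff l r (i + t) * σ (circCoeff l t (i + t))
      = circCoeff l r t * if (i : ℕ) + (t - r : Fin k) < k then 1 else σ l := by
  have hit := Fin.val_add_eq_ite i t
  have htr := Fin.val_sub_eq_ite t r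
  unfold circCoeff
  simp only [Fin.le_iff_val_le_val] at *
  split_ifs at * <;> first | omega | simp [hl]

def circGramBlock (σ : F) (k : ℕ) (l : R) (A : ℕ → Matrix (Fin n) (Fin n) R) (j : ℕ) :
    Matrix (Fin n) (Fin n) R :=
  (∑ i ∈ range (k - j), A ((i + j) % k) * ((A i).map σ)ᵀ)
    + σ l • ∑ i ∈ Ico (k - j) k, A ((i + j) % k) * ((A i).map σ)ᵀ

theorem circGramBlock_eq_sum_range (σ : F) (l : R) (A : ℕ → Matrix (Fin n) (Fin n) R)
    {j : ℕ} (hj : j ≤ k) :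
    circGramBlock σ k l A j =
      ∑ i ∈ range k,
        (if i + j < k then 1 else σ l) • (A ((i + j) % k) * ((A i).map σ)ᵀ) := by
  rw [circGramBlock, ← sum_range_add_sum_Ico _ (Nat.sub_le k j), smul_sum]
  congr 1 <;> refine sum_congr rfl fun i hi => ?_ <;> simp only [mem_range, mem_Ico] at hi
  · rw [if_pos (by omega), one_smul]
  · rw [if_neg (by omega)]

theorem circGramBlock_zero (σ : F) (l : R) (A : ℕ → Matrix (Fin n) (Fin n) R) :
    circGramBlock σ k l A 0 = ∑ i ∈ range k, A i * ((A i).map σ)ᵀ := by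
  rw [circGramBlock_eq_sum_range σ l A (Nat.zero_le k)]
  refine sum_congr rfl fun i hi => ?_
  rw [mem_range] at hi
  rw [add_zero, if_pos hi, one_smul, Nat.mod_eq_of_lt hi]

theorem sum_circBlock_mul_map_transpose [NeZero k] [MonoidHomClass F R R] (σ : F) {l : R}
    (hl : l * σ l = 1) (A : ℕ → Matrix (Fin n) (Fin n) R) (r t : Fin k) :
    ∑ s : Fin k, circBlock l A r s * ((circBlock l A t s).map σ)ᵀ
      = circCoeff l r t • circGramBlock σ k l A (t - r : Fin k) := by
  rw [← Equiv.sum_comp (Equiv.addRight t), circGramBlock_eq_sum_range σ l A (t - r).isLt.le,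
    smul_sum, ← Fin.sum_univ_eq_sum_range]
  refine Fintype.sum_congr _ _ fun i => ?_
  rw [circBlock, circBlock, Equiv.coe_addRight, add_sub_cancel_right, add_sub_assoc,
    ← Fin.val_add, Matrix.map_smul' _ _ _ (map_mul σ), transpose_smul, smul_mul_smul_comm,
    circCoeff_mul_map_circCoeff σ hl, mul_smul]

theorem blockCirc_mul_map_transpose [NeZero k] [MonoidHomClass F R R] (σ : F) {l : R}
    (hl : l * σ l = 1) (A : ℕ → Matrix (Fin n) (Fin n) R) :
    blockCirc k n l A * ((blockCirc k n l A).map σ)ᵀ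
      = blockCirc k n l (circGramBlock σ k l A) := by
  ext ⟨r, x⟩ ⟨t, y⟩
  simp only [mul_apply, Fintype.sum_prod_type, transpose_apply, map_apply, blockCirc_apply]
  rw [circBlock, ← sum_circBlock_mul_map_transpose σ hl A r t]
  simp only [Matrix.sum_apply, mul_apply, transpose_apply, map_apply]

theorem blockCirc_eq_neg_one_iff [NeZero k] (l : R) (C : ℕ → Matrix (Fin n) (Fin n) R) :
    blockCirc k n l C = -1 ↔ C 0 = -1 ∧ ∀ j, 1 ≤ j → j < k → C j = 0 := by
  have hrow : ∀ (j : Fin k) (x y : Fin n), blockCirc k n l C (0, x) (j, y) = C j x y := by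
    intro j x y
    rw [blockCirc_apply, circBlock, circCoeff, if_pos (Fin.zero_le j), one_smul, sub_zero]
  constructor
  · intro h
    refine ⟨?_, fun j hj hjk => ?_⟩
    · ext x y
      simpa [one_apply] using (hrow 0 x y).symm.trans (congr_fun₂ h (0, x) (0, y))
    · ext x y
      have hne : (0 : Fin k) ≠ ⟨j, hjk⟩ := by simp [Fin.ext_iff]; omega
      simpa [one_apply, hne] using
        (hrow ⟨j, hjk⟩ x y).symm.trans (congr_fun₂ h (0, x) (_, y))
  · rintro ⟨h0, hj⟩
    ext ⟨r, x⟩ ⟨t, y⟩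
    rw [blockCirc_apply, circBlock]
    by_cases hrt : r = t
    · subst hrt
      simp [circCoeff, h0, one_apply]
    · have hpos : 1 ≤ ((t - r : Fin k) : ℕ) := by
        have := Fin.val_sub_eq_ite t r
        rw [Fin.ext_iff] at hrt
        split_ifs at this <;> omega
      rw [hj _ hpos (t - r).isLt, smul_zero, Matrix.zero_apply, Matrix.neg_apply, one_apply,
        if_neg (by simp [hrt]), neg_zero]

end

theorem stmt11_general {R : Type*} [CommRing R] (σ : R ≃+* R)
    (n k : ℕ) (hk : 1 ≤ k) (A : ℕ → Matrix (Fin n) (Fin n) R)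
    (l : R) (hl : l * σ l = 1)
    (X : Matrix (Fin k × Fin n) (Fin k × Fin n) R) (hX : X = blockCirc k n l A) :
    X * (X.map σ)ᵀ = -1
      ↔ (∑ i ∈ Finset.range k, A i * ((A i).map σ)ᵀ = -1
          ∧ ∀ j, 1 ≤ j → j ≤ k - 1 →
              (∑ i ∈ Finset.range (k - j), A ((i + j) % k) * ((A i).map σ)ᵀ)
                + σ l • ∑ i ∈ Finset.Ico (k - j) k, A ((i + j) % k) * ((A i).map σ)ᵀ = 0) := by
  have : NeZero k := ⟨by omega⟩
  subst hX
  rw [blockCirc_mul_map_transpose σ hl, blockCirc_eq_neg_one_iff, circGramBlock_zero]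
  refine and_congr_right fun _ => forall_congr' fun j => imp_congr_right fun _ => ?_
  exact ⟨fun h hj => h (by omega), fun h hj => h (by omega)⟩

theorem stmt11 {R : Type*} [CommRing R] (σ : R ≃+* R) (hσ : Function.Involutive σ)
    (n k : ℕ) (hn : 1 ≤ n) (hk : 1 ≤ k) (A : ℕ → Matrix (Fin n) (Fin n) R)
    (l : R) (hl : l * σ l = 1)
    (X : Matrix (Fin k × Fin n) (Fin k × Fin n) R) (hX : X = blockCirc k n l A) :
    X * (X.map σ)ᵀ = -1
      ↔ (∑ i ∈ Finset.range k, A i * ((A i).map σ)ᵀ = -1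
          ∧ ∀ j, 1 ≤ j → j ≤ k - 1 →
              (∑ i ∈ Finset.range (k - j), A ((i + j) % k) * ((A i).map σ)ᵀ)
                + σ l • ∑ i ∈ Finset.Ico (k - j) k, A ((i + j) % k) * ((A i).map σ)ᵀ = 0) :=
  stmt11_general σ n k hk A l hl X hX
end

section
/- Let F be a field equipped with an involutive field automorphism r ↦ r̄, and let G' be an n×2n matrix over F whose rows r_1,…,r_n span a Hermitian self-dual code C' ⊆ F^{2n} (that is, C' = C'^{⊥_H}). Let ε ∈ F satisfy ε·ε̄ = −1, let δ ∈ F^{2n} satisfy ⟨δ,δ⟩_H = −1, and set γ_i = ⟨r_i, δ⟩_H for i = 1,…,n. Let G be the (n+1)×(2n+2) matrix whose first row is (1, 0, δ) and whose (i+1)-st row is (−γ_i, ε·γ_i, r_i) for i = 1,…,n. Then the F-linear span of the rows of G is a Hermitian self-dual code in F^{2n+2}, i.e. it equals its own Hermitian dual. -/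
open Matrix LinearMap.BilinForm Module

section Aux

variable {F : Type*} [Field F] {κ : Type*} [Fintype κ] [DecidableEq κ]

instance (σ : F ≃+* F) : RingHomSurjective (σ : F →+* F) := ⟨σ.surjective⟩

noncomputable def dotB : LinearMap.BilinForm F (κ → F) :=
  LinearMap.mk₂ F (fun x y => ∑ c, x c * y c)
    (by intro x x' y; simp [add_mul, Finset.sum_add_distrib])
    (by intro a x y; simp [Finset.mul_sum, mul_assoc])
    (by intro x y y'; simp [mul_add, Finset.sum_add_distrib])
    (by intro a x y; simp [Finset.mul_sum, mul_left_comm])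

lemma dotB_apply (x y : κ → F) : dotB x y = ∑ c, x c * y c := rfl

lemma dotB_refl : (dotB (F := F) (κ := κ)).IsRefl := by
  intro x y h
  rw [dotB_apply] at h ⊢
  simpa [mul_comm] using h

lemma dotB_nondeg : (dotB (F := F) (κ := κ)).Nondegenerate := by
  refine (LinearMap.IsRefl.nondegenerate_iff_separatingLeft (fun x y h => dotB_refl x y h)).mpr ?_
  intro x hx
  funext c
  have := hx (Pi.single c 1)
  simpa [dotB_apply, Pi.single_apply, mul_ite, Finset.sum_ite_eq'] using this

variable (σ : F ≃+* F)

attribute [local instance] RingHomInvPair.of_ringEquiv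

noncomputable def conjEquiv : (κ → F) ≃ₛₗ[(σ : F →+* F)] (κ → F) where
  toFun x c := σ (x c)
  invFun x c := σ.symm (x c)
  map_add' x y := by funext c; simp
  map_smul' a x := by funext c; simp [Pi.smul_apply, smul_eq_mul]
  left_inv x := by funext c; simp
  right_inv x := by funext c; simp

lemma dual_eq_orth (p : Submodule F (κ → F)) :
    {x : κ → F | ∀ y ∈ p, ∑ c, x c * σ (y c) = 0}
      = ↑(dotB.orthogonal (p.map (conjEquiv (κ := κ) σ).toLinearMap)) := by
  ext x
  simp only [Set.mem_setOf_eq, SetLike.mem_coe, LinearMap.BilinForm.mem_orthogonal_iff]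
  constructor
  · rintro h _ ⟨y, hy, rfl⟩
    have := h y hy
    simp only [LinearMap.BilinForm.IsOrtho, dotB_apply]
    calc ∑ c, (conjEquiv σ).toLinearMap y c * x c = ∑ c, x c * σ (y c) := by
          refine Finset.sum_congr rfl fun c _ => ?_
          simp [conjEquiv, mul_comm]
      _ = 0 := this
  · intro h y hy
    have := h _ (Submodule.mem_map_of_mem hy)
    rw [dotB_apply] at this
    calc ∑ c, x c * σ (y c) = ∑ c, (conjEquiv σ).toLinearMap y c * x c := by
          refine Finset.sum_congr rfl fun c _ => ?_
          simp [conjEquiv, mul_comm]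
      _ = 0 := this

lemma finrank_map_conj (p : Submodule F (κ → F)) :
    finrank F (p.map (conjEquiv (κ := κ) σ).toLinearMap) = finrank F p := by
  have e := (conjEquiv (κ := κ) σ).submoduleMap p
  have hr : Module.rank F p
      = Module.rank F (p.map (conjEquiv (κ := κ) σ).toLinearMap) :=
    rank_eq_of_equiv_equiv (⟨σ, map_zero σ⟩ : ZeroHom F F) e.toAddEquiv σ.bijective
      (fun r m => e.toLinearMap.map_smulₛₗ r m)
  rw [Module.finrank, Module.finrank, hr]

lemma mem_orth_span {S : Set (κ → F)} {x : κ → F} :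
    x ∈ (dotB (F := F)).orthogonal (Submodule.span F S) ↔ ∀ s ∈ S, dotB s x = 0 := by
  constructor
  · exact fun h s hs => h s (Submodule.subset_span hs)
  · intro h y hy
    induction hy using Submodule.span_induction with
    | mem s hs => exact h s hs
    | zero => simp [LinearMap.BilinForm.IsOrtho]
    | add y z _ _ hy hz =>
        simp only [LinearMap.BilinForm.IsOrtho, map_add, LinearMap.add_apply] at *
        rw [hy, hz, add_zero]
    | smul a y _ hy =>
        simp only [LinearMap.BilinForm.IsOrtho, _root_.map_smul, LinearMap.smul_apply,
          smul_eq_mul] at *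
        rw [hy, mul_zero]

end Aux

attribute [local instance] RingHomInvPair.of_ringEquiv

open Matrix

/-- The building-up matrix: first row is `(1, 0, δ)` and the row indexed by `i : Fin n`
is `(-γ i, ε * γ i, r_i)` where `r_i` is the `i`-th row of `G'`. -/
def buildUp {F : Type*} [CommRing F] {n m : ℕ} (G' : Matrix (Fin n) (Fin m) F)
    (ε : F) (δ : Fin m → F) (γ : Fin n → F) :
    Matrix (Unit ⊕ Fin n) (Fin 2 ⊕ Fin m) F :=
  Matrix.of (Sum.elim
    (fun _ => Sum.elim (fun j => if j = 0 then (1 : F) else 0) δ)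
    (fun i => Sum.elim (fun j => if j = 0 then -γ i else ε * γ i) (G' i)))

theorem stmt14 {F : Type*} [Field F] (σ : F ≃+* F) (hσ : Function.Involutive σ)
    (n : ℕ) (hn : 1 ≤ n) (G' : Matrix (Fin n) (Fin (2 * n)) F)
    (hsd : (Submodule.span F (Set.range fun i => G' i) : Set (Fin (2 * n) → F))
      = {x | ∀ y ∈ Submodule.span F (Set.range fun i => G' i), ∑ c, x c * σ (y c) = 0})
    (ε : F) (hε : ε * σ ε = -1)
    (δ : Fin (2 * n) → F) (hδ : ∑ c, δ c * σ (δ c) = -1)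
    (γ : Fin n → F) (hγ : ∀ i, γ i = ∑ c, G' i c * σ (δ c)) :
    (Submodule.span F (Set.range fun i => buildUp G' ε δ γ i)
        : Set (Fin 2 ⊕ Fin (2 * n) → F))
      = {x | ∀ y ∈ Submodule.span F (Set.range fun i => buildUp G' ε δ γ i),
          ∑ c, x c * σ (y c) = 0} := by
  classical
  set C' : Submodule F (Fin (2 * n) → F) := Submodule.span F (Set.range fun i => G' i)
    with hC'def
  set g : Unit ⊕ Fin n → (Fin 2 ⊕ Fin (2 * n) → F) := fun a => buildUp G' ε δ γ a with hgdef
  set C : Submodule F (Fin 2 ⊕ Fin (2 * n) → F) := Submodule.span F (Set.range g) with hCdef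
  have hεne : ε ≠ 0 := by
    intro h
    rw [h, zero_mul] at hε
    exact (neg_ne_zero.mpr (one_ne_zero)) hε.symm
  -- finrank C' = n
  have hsd2 : C' = dotB.orthogonal (C'.map (conjEquiv (κ := Fin (2 * n)) σ).toLinearMap) :=
    SetLike.coe_injective (by rw [hsd, dual_eq_orth])
  have hfr' : Module.finrank F C' = n := by
    have h1 := LinearMap.BilinForm.finrank_orthogonal (dotB_nondeg (F := F))
      (C'.map (conjEquiv (κ := Fin (2 * n)) σ).toLinearMap)
    rw [finrank_map_conj, Module.finrank_pi, Fintype.card_fin, ← hsd2] at h1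
    have h2 : Module.finrank F C' ≤ 2 * n := by
      have := Submodule.finrank_le C'
      rwa [Module.finrank_pi, Fintype.card_fin] at this
    omega
  have hC'orth : ∀ y ∈ C', ∀ z ∈ C', ∑ c, y c * σ (z c) = 0 := by
    intro y hy z hz
    have hy' : y ∈ (C' : Set _) := hy
    rw [hsd] at hy'
    exact hy' z hz
  have hrowC' : ∀ i, G' i ∈ C' := fun i => Submodule.subset_span ⟨i, rfl⟩
  -- pairwise orthogonality of generators
  have sum_expand : ∀ x y : Fin 2 ⊕ Fin (2 * n) → F,
      ∑ c, x c * σ (y c) = x (Sum.inl 0) * σ (y (Sum.inl 0))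
        + x (Sum.inl 1) * σ (y (Sum.inl 1))
        + ∑ c, x (Sum.inr c) * σ (y (Sum.inr c)) := by
    intro x y
    rw [Fintype.sum_sum_type, Fin.sum_univ_two]
  have hv0 : ∀ j, g (Sum.inl ()) j
      = Sum.elim (fun j : Fin 2 => if j = 0 then (1 : F) else 0) δ j := fun _ => rfl
  have hw : ∀ i j, g (Sum.inr i) j
      = Sum.elim (fun j : Fin 2 => if j = 0 then -γ i else ε * γ i) (G' i) j :=
    fun _ _ => rfl
  have e0 : ∀ k, (if (0 : Fin 2) = 0 then -γ k else ε * γ k) = -γ k := fun k => if_pos rfl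
  have e1 : ∀ k, (if (1 : Fin 2) = 0 then -γ k else ε * γ k) = ε * γ k :=
    fun k => if_neg (by decide)
  have d0 : (if (0 : Fin 2) = 0 then (1 : F) else 0) = 1 := if_pos rfl
  have d1 : (if (1 : Fin 2) = 0 then (1 : F) else 0) = 0 := if_neg (by decide)
  have key : ∀ a b, ∑ c, g a c * σ (g b c) = 0 := by
    have hσγ : ∀ i, σ (γ i) = ∑ c, δ c * σ (G' i c) := by
      intro i
      rw [hγ i, map_sum]
      refine Finset.sum_congr rfl fun c _ => ?_
      rw [_root_.map_mul, hσ, mul_comm]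
    rintro (⟨⟩ | i) (⟨⟩ | j)
    · rw [sum_expand]
      simp only [hv0, Sum.elim_inl, Sum.elim_inr]
      simp [hδ]
    · rw [sum_expand]
      simp only [hv0, hw, Sum.elim_inl, Sum.elim_inr]
      simp [hσγ j, map_neg]
    · rw [sum_expand]
      simp only [hv0, hw, Sum.elim_inl, Sum.elim_inr]
      simp [← hγ i]
    · rw [sum_expand]
      simp only [hw, Sum.elim_inl, Sum.elim_inr]
      have hS : ∑ c, G' i c * σ (G' j c) = 0 := hC'orth _ (hrowC' i) _ (hrowC' j)
      simp only [if_true]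
      rw [e1 i, e1 j, map_neg, _root_.map_mul]
      linear_combination γ i * σ (γ j) * hε + hS
  -- C is contained in its Hermitian dual
  have hCD : C ≤ dotB.orthogonal (C.map (conjEquiv (κ := Fin 2 ⊕ Fin (2 * n)) σ).toLinearMap) := by
    rw [hCdef, Submodule.map_span]
    refine Submodule.span_le.mpr ?_
    rintro x ⟨a, rfl⟩
    rw [SetLike.mem_coe, mem_orth_span]
    rintro s ⟨y, ⟨b, rfl⟩, rfl⟩
    rw [dotB_apply]
    calc ∑ c, (conjEquiv (κ := Fin 2 ⊕ Fin (2 * n)) σ).toLinearMap (g b) c * g a c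
        = ∑ c, g a c * σ (g b c) :=
          Finset.sum_congr rfl fun c _ => by simp [conjEquiv, mul_comm]
      _ = 0 := key a b
  -- lower bound on finrank C
  have hfinC : n + 1 ≤ Module.finrank F C := by
    set W : Submodule F (Fin 2 ⊕ Fin (2 * n) → F) :=
      Submodule.span F (Set.range fun i => g (Sum.inr i)) with hWdef
    have hWle : W ≤ C := by
      refine Submodule.span_le.mpr ?_
      rintro x ⟨i, rfl⟩
      exact Submodule.subset_span ⟨Sum.inr i, rfl⟩
    set π : (Fin 2 ⊕ Fin (2 * n) → F) →ₗ[F] (Fin (2 * n) → F) :=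
      LinearMap.funLeft F F Sum.inr with hπdef
    have hmap : W.map π = C' := by
      rw [hWdef, Submodule.map_span, ← Set.range_comp]
      rfl
    have hnW : n ≤ Module.finrank F W := by
      have h := Submodule.finrank_map_le π W
      rwa [hmap, hfr'] at h
    have hv0W : g (Sum.inl ()) ∉ W := by
      intro hmem
      set f : (Fin 2 ⊕ Fin (2 * n) → F) →ₗ[F] F :=
        ε • LinearMap.proj (Sum.inl 0) + LinearMap.proj (Sum.inl 1) with hfdef
      have hfW : W ≤ LinearMap.ker f := by
        refine Submodule.span_le.mpr ?_
        rintro x ⟨i, rfl⟩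
        simp only [SetLike.mem_coe, LinearMap.mem_ker, hfdef, LinearMap.add_apply,
          LinearMap.smul_apply, LinearMap.proj_apply, smul_eq_mul]
        rw [hw i, hw i]
        simp only [Sum.elim_inl, if_true]
        rw [e1 i]
        ring
      have hker := hfW hmem
      simp only [LinearMap.mem_ker, hfdef, LinearMap.add_apply, LinearMap.smul_apply,
        LinearMap.proj_apply, smul_eq_mul] at hker
      rw [hv0, hv0] at hker
      simp only [Sum.elim_inl, if_true] at hker
      rw [d1, mul_one, add_zero] at hker
      exact hεne hker
    have hlt : W < C := lt_of_le_of_ne hWle (by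
      intro h
      exact hv0W (h.symm ▸ Submodule.subset_span ⟨Sum.inl (), rfl⟩))
    have := Submodule.finrank_lt_finrank_of_lt hlt
    omega
  -- upper bound and conclusion
  have hD := LinearMap.BilinForm.finrank_orthogonal (dotB_nondeg (F := F))
    (C.map (conjEquiv (κ := Fin 2 ⊕ Fin (2 * n)) σ).toLinearMap)
  rw [finrank_map_conj, Module.finrank_pi] at hD
  have hcard : Fintype.card (Fin 2 ⊕ Fin (2 * n)) = 2 * n + 2 := by
    simp [Fintype.card_sum]
    omega
  rw [hcard] at hD
  have hle : Module.finrank F C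
      ≤ Module.finrank F (dotB.orthogonal
          (C.map (conjEquiv (κ := Fin 2 ⊕ Fin (2 * n)) σ).toLinearMap)) :=
    Submodule.finrank_mono hCD
  have hfinal : C = dotB.orthogonal
      (C.map (conjEquiv (κ := Fin 2 ⊕ Fin (2 * n)) σ).toLinearMap) :=
    Submodule.eq_of_le_of_finrank_le hCD (by omega)
  rw [dual_eq_orth (κ := Fin 2 ⊕ Fin (2 * n)) σ C]
  exact congrArg _ hfinal
end

section
/- Let F4 be the field with four elements with conjugation x̄ = x², and let R = F4[u]/(u²) be the ring of dual numbers over F4 (elements a + bu with a, b ∈ F4 and u² = 0), with conjugation given by (a + bu)‾ = ā + b̄·u. Define the Gray map φ : R^n → F4^{2n} by φ(a + bu) = (b, a + b), i.e. for x ∈ R^n with x_i = a_i + b_i·u, φ(x) = (b_1,…,b_n, a_1+b_1,…,a_ن+b_n). If C is an R-submodule of R^n that is Hermitian self-dual (C = C^{⊥_H} with respect to ⟨x,y⟩_H = Σ_i x_i·ȳ_i on R^n), then φ(C) is an F4-subspace of F4^{2n} that is Hermitian self-dual (φ(C) = φ(C)^{⊥_H} with respect to ⟨x,y⟩_H = Σ_i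 x_i·ȳ_i on F4^{2n}). -/
open Matrix TrivSqZeroExt

/-- The field with four elements. -/
abbrev F4 : Type := GaloisField 2 2

/-- Conjugation on `F4 + u F4` (the dual numbers over `F4`): `(a + bu)‾ = a² + b²·u`. -/
noncomputable def conjR (z : DualNumber F4) : DualNumber F4 :=
  TrivSqZeroExt.inl (z.fst ^ 2) + TrivSqZeroExt.inr (z.snd ^ 2)

/-- The Gray map `φ : (F4 + u F4)^n → F4^{2n}`, `a + bu ↦ (b, a + b)` componentwise. -/
noncomputable def gray (n : ℕ) (x : Fin n → DualNumber F4) : (Fin n ⊕ Fin n) → F4 :=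
  Sum.elim (fun i => (x i).snd) (fun i => (x i).fst + (x i).snd)

lemma conjR_fst (z : DualNumber F4) : (conjR z).fst = z.fst ^ 2 := by
  simp [conjR]

lemma conjR_snd (z : DualNumber F4) : (conjR z).snd = z.snd ^ 2 := by
  simp [conjR]

lemma gray_add (n : ℕ) (x y : Fin n → DualNumber F4) :
    gray n (x + y) = gray n x + gray n y := by
  funext c; cases c <;> simp [gray, add_add_add_comm]

lemma gray_zero (n : ℕ) : gray n 0 = 0 := by
  funext c; cases c <;> simp [gray]

lemma gray_smul (n : ℕ) (r : F4) (x : Fin n → DualNumber F4) :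
    gray n ((inl r : DualNumber F4) • x) = r • gray n x := by
  funext c
  cases c <;>
    simp [gray, Pi.smul_apply, smul_eq_mul, snd_mul, fst_mul, mul_add]

/-- key pairing computation -/
lemma pairing_eq (n : ℕ) (x y : Fin n → DualNumber F4) :
    ∑ c, gray n x c * (gray n y c) ^ 2
      = (∑ i, x i * conjR (y i)).fst + (∑ i, x i * conjR (y i)).snd := by
  rw [fst_sum, snd_sum, Fintype.sum_sum_type, ← Finset.sum_add_distrib,
    ← Finset.sum_add_distrib]
  refine Finset.sum_congr rfl fun i _ => ?_
  have h2 : ((x i).fst + (x i).snd) * ((y i).fst + (y i).snd) ^ 2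
      = ((x i).fst + (x i).snd) * ((y i).fst ^ 2 + (y i).snd ^ 2) := by
    rw [add_pow_char]
  simp only [gray, Sum.elim_inl, Sum.elim_inr, fst_mul, snd_mul, conjR_fst, conjR_snd,
    smul_eq_mul, op_smul_eq_mul, h2]
  have h0 : (2 : F4) = 0 := CharTwo.two_eq_zero
  ring_nf
  linear_combination (snd (x i) * snd (y i) ^ 2) * h0

lemma eps_smul_mem (n : ℕ) (C : Submodule (DualNumber F4) (Fin n → DualNumber F4))
    {y : Fin n → DualNumber F4} (hy : y ∈ C) :
    (DualNumber.eps : DualNumber F4) • y ∈ C := C.smul_mem _ hy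

lemma pairing_eps (n : ℕ) (x y : Fin n → DualNumber F4) :
    ∑ c, gray n x c * (gray n ((DualNumber.eps : DualNumber F4) • y) c) ^ 2
      = (∑ i, x i * conjR (y i)).fst := by
  rw [pairing_eq, fst_sum, fst_sum, snd_sum, ← Finset.sum_add_distrib]
  refine Finset.sum_congr rfl fun i _ => ?_
  simp only [Pi.smul_apply, smul_eq_mul, fst_mul, snd_mul, conjR_fst, conjR_snd,
    DualNumber.fst_eps, DualNumber.snd_eps, smul_eq_mul, op_smul_eq_mul]
  ring

theorem stmt19 (n : ℕ) (C : Submodule (DualNumber F4) (Fin n → DualNumber F4))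
    (hC : (C : Set (Fin n → DualNumber F4))
      = {x | ∀ y ∈ C, ∑ i, x i * conjR (y i) = 0}) :
    (∃ W : Submodule F4 ((Fin n ⊕ Fin n) → F4),
        (W : Set ((Fin n ⊕ Fin n) → F4)) = gray n '' (C : Set (Fin n → DualNumber F4)))
      ∧ gray n '' (C : Set (Fin n → DualNumber F4))
        = {x | ∀ y ∈ gray n '' (C : Set (Fin n → DualNumber F4)),
            ∑ c, x c * (y c) ^ 2 = 0} := by
  constructor
  · refine ⟨{ carrier := gray n '' (C : Set _)
              add_mem' := ?_
              zero_mem' := ⟨0, C.zero_mem, gray_zero n⟩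
              smul_mem' := ?_ }, rfl⟩
    · rintro _ _ ⟨a, ha, rfl⟩ ⟨b, hb, rfl⟩
      exact ⟨a + b, C.add_mem ha hb, gray_add n a b⟩
    · rintro r _ ⟨a, ha, rfl⟩
      exact ⟨(inl r : DualNumber F4) • a, C.smul_mem _ ha, gray_smul n r a⟩
  · ext z
    constructor
    · rintro ⟨x, hx, rfl⟩ w ⟨y, hy, rfl⟩
      have hxy : ∑ i, x i * conjR (y i) = 0 := by
        have := hC ▸ hx
        exact this y hy
      rw [pairing_eq, hxy]
      simp
    · intro hz
      -- construct the preimage x of z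
      set x : Fin n → DualNumber F4 :=
        fun i => inl (z (Sum.inr i) + z (Sum.inl i)) + inr (z (Sum.inl i)) with hxdef
      have hgx : gray n x = z := by
        funext c
        cases c with
        | inl i => simp [gray, hxdef]
        | inr i =>
            simp only [gray, Sum.elim_inr, hxdef, fst_add, snd_add, fst_inl, snd_inl,
              fst_inr, snd_inr, add_zero, zero_add]
            rw [add_assoc, CharTwo.add_self_eq_zero, add_zero]
      have hxC : x ∈ C := by
        have : x ∈ (C : Set (Fin n → DualNumber F4)) := by
          rw [hC]
          intro y hy
          have h1 : (∑ i, x i * conjR (y i)).fst = 0 := by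
            have h := hz _ ⟨_, C.smul_mem DualNumber.eps hy, rfl⟩
            rw [← hgx, pairing_eps] at h
            exact h
          have h2 : (∑ i, x i * conjR (y i)).fst + (∑ i, x i * conjR (y i)).snd = 0 := by
            have h := hz _ ⟨_, hy, rfl⟩
            rw [← hgx, pairing_eq] at h
            exact h
          have h3 : (∑ i, x i * conjR (y i)).snd = 0 := by
            rw [h1, zero_add] at h2; exact h2
          ext <;> simp [h1, h3]
        exact this
      exact ⟨x, hxC, hgx⟩
end
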